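/- arXiv:2309.01589 — 5 statements merged into one kernel-verified Lean document; each statement's English description precedes it below -/
import Mathlib

section
/- Let (a_n) be a nonincreasing sequence of positive reals with convergent sum, and let A be its achievement set (set of all subsums). If (α, β) is a gap of A of order k (i.e., a connectivity component of I_{k-1} \ I_k), then its length β − α is at most a_k − r_k, where r_k is the k-th remainder. In particular, the principal gap (r_k, a_k) has maximal length among all gaps of order k. -/
open Set MeasureTheory Pointwise

/-- The achievement set (set of all subsums) of the series `∑ a n`. -/
noncomputable def achievementSet (a : ℕ → ℝ) : Set ℝ :=
  {x | ∃ I : Set ℕ, HasSum (fun i : I => a i) x}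

/-- `tail a n` is the sum of the terms with index `≥ n`. -/
noncomputable def tail (a : ℕ → ℝ) (n : ℕ) : ℝ := ∑' i : ℕ, a (n + i)

/-- The set of `k`-initial subsums: sums over subsets of the first `k` terms. -/
def Fset (a : ℕ → ℝ) (k : ℕ) : Set ℝ :=
  {x | ∃ I : Finset ℕ, I ⊆ Finset.range k ∧ x = ∑ i ∈ I, a i}

/-- The `k`-th iterate `I_k = ⋃_{f ∈ F_k} [f, f + r_k]`. -/
noncomputable def iter (a : ℕ → ℝ) (k : ℕ) : Set ℝ :=
  ⋃ f ∈ Fset a k, Set.Icc f (f + tail a k)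

/-- A Cantor set: a nonempty compact perfect nowhere dense subset of `ℝ`. -/
def IsCantorSet (C : Set ℝ) : Prop :=
  C.Nonempty ∧ IsCompact C ∧ Perfect C ∧ interior C = ∅

/-- A Cantorval: a nonempty compact set equal to the closure of its interior such that
both endpoints of every nontrivial connected component are accumulation points of
trivial (one-point) components. -/
def IsCantorval (P : Set ℝ) : Prop :=
  P.Nonempty ∧ IsCompact P ∧ P = closure (interior P) ∧
  ∀ x ∈ P, (connectedComponentIn P x).Nontrivial →
    ∀ y ∈ ({sInf (connectedComponentIn P x), sSup (connectedComponentIn P x)} : Set ℝ),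
      ∀ ε > 0, ∃ z ∈ P, z ≠ y ∧ |z - y| < ε ∧ connectedComponentIn P z = {z}

/-!
If `x ∈ I_{k-1} \ I_k`, pick `f ∈ F_{k-1}` with `x ∈ [f, f + r_{k-1}]`. Since
`r_{k-1} = a_k + r_k`, the points `f + r_k` and `f + a_k` both lie in `I_k` (they are
endpoints of the intervals of `I_k` attached to `f` and `f + a_k ∈ F_k`), and `x` lies
strictly between them. A gap through `x` cannot contain either point, so it is trapped in
`(f + r_k, f + a_k)`.
-/

theorem le_and_le_of_Ioo_subset {X : Type*} [LinearOrder X] {S : Set X} {α β u v x : X}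
    (hS : Ioo α β ⊆ S) (hx : x ∈ Ioo α β) (hux : u < x) (hxv : x < v)
    (hu : u ∉ S) (hv : v ∉ S) : u ≤ α ∧ β ≤ v := by
  constructor
  · by_contra! h
    exact hu (hS ⟨h, hux.trans hx.2⟩)
  · by_contra! h
    exact hv (hS ⟨hx.1.trans hxv, h⟩)

section Iterates

variable {a : ℕ → ℝ}

theorem tail_nonneg (ha : ∀ n, 0 ≤ a n) (n : ℕ) : 0 ≤ tail a n :=
  tsum_nonneg fun i => ha (n + i)

theorem tail_eq_add_tail_succ (hsum : Summable a) (n : ℕ) :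
    tail a n = a n + tail a (n + 1) := by
  have hsum' : Summable fun i => a (n + i) := hsum.comp_injective (add_right_injective n)
  simp only [tail, hsum'.tsum_eq_zero_add, add_zero, add_assoc, add_comm 1]

theorem Fset_subset_Fset_succ (n : ℕ) : Fset a n ⊆ Fset a (n + 1) := by
  rintro _ ⟨I, hI, rfl⟩
  exact ⟨I, hI.trans (Finset.range_subset_range.mpr n.le_succ), rfl⟩

theorem add_mem_Fset_succ {f : ℝ} {n : ℕ} (hf : f ∈ Fset a n) : f + a n ∈ Fset a (n + 1) := by
  obtain ⟨I, hI, rfl⟩ := hf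
  have hnI : n ∉ I := fun h => by simpa using hI h
  refine ⟨insert n I, ?_, by rw [Finset.sum_insert hnI, add_comm]⟩
  rw [Finset.range_add_one]
  exact Finset.insert_subset_insert n hI

theorem Icc_subset_iter {f : ℝ} {n : ℕ} (hf : f ∈ Fset a n) :
    Icc f (f + tail a n) ⊆ iter a n :=
  fun _ hy => mem_biUnion hf hy

theorem exists_mem_iter_succ_lt_lt_of_mem_iter_diff (ha : ∀ n, 0 ≤ a n) (hsum : Summable a)
    {n : ℕ} {x : ℝ} (hx : x ∈ iter a n \ iter a (n + 1)) :
    ∃ f : ℝ, f + tail a (n + 1) < x ∧ x < f + a n ∧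
      f + tail a (n + 1) ∈ iter a (n + 1) ∧ f + a n ∈ iter a (n + 1) := by
  obtain ⟨hxn, hxn'⟩ := hx
  simp only [iter, mem_iUnion, mem_Icc] at hxn
  obtain ⟨f, hf, hfx, hxf⟩ := hxn
  rw [tail_eq_add_tail_succ hsum] at hxf
  have hr := tail_nonneg ha (n + 1)
  have hlow := Icc_subset_iter (Fset_subset_Fset_succ n hf)
  have hhigh := Icc_subset_iter (add_mem_Fset_succ hf)
  refine ⟨f, ?_, ?_, hlow ⟨by linarith, le_rfl⟩, hhigh ⟨le_rfl, by linarith⟩⟩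
  · by_contra! h
    exact hxn' (hlow ⟨hfx, h⟩)
  · by_contra! h
    exact hxn' (hhigh ⟨h, by linarith⟩)

end Iterates

/-- With 0-indexing, the paper's `a_k` is `a (k - 1)` and `r_k` is `tail a k`. -/
theorem stmt_0_general (a : ℕ → ℝ) (hpos : ∀ n, 0 < a n)
    (hsum : Summable a) (k : ℕ) (α β : ℝ)
    (x : ℝ) (hx : x ∈ iter a (k - 1) \ iter a k)
    (hgap : Set.Ioo α β = connectedComponentIn (iter a (k - 1) \ iter a k) x) :
    β - α ≤ a (k - 1) - tail a k := by
  cases k with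
  | zero => simp at hx
  | succ n =>
    simp only [Nat.add_sub_cancel] at hx hgap ⊢
    obtain ⟨f, hlo, hhi, hloS, hhiS⟩ :=
      exists_mem_iter_succ_lt_lt_of_mem_iter_diff (fun n => (hpos n).le) hsum hx
    have hgapS : Ioo α β ⊆ iter a n \ iter a (n + 1) :=
      hgap ▸ connectedComponentIn_subset _ _
    have hxgap : x ∈ Ioo α β := hgap ▸ mem_connectedComponentIn hx
    obtain ⟨hα, hβ⟩ := le_and_le_of_Ioo_subset hgapS hxgap hlo hhi
      (fun h => h.2 hloS) (fun h => h.2 hhiS)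
    linarith

/-- Every gap of order k (a connected component of I_{k-1} \ I_k) has
length at most a_k - r_k; in particular the principal gap (r_k, a_k) has maximal
length among gaps of order k. With 0-indexing, the paper's a_k is a (k-1) and r_k
is tail a k. -/
theorem stmt_0 (a : ℕ → ℝ) (hpos : ∀ n, 0 < a n) (hmono : Antitone a)
    (hsum : Summable a) (k : ℕ) (hk : 1 ≤ k) (α β : ℝ) (hαβ : α < β)
    (x : ℝ) (hx : x ∈ iter a (k - 1) \ iter a k)
    (hgap : Set.Ioo α β = connectedComponentIn (iter a (k - 1) \ iter a k) x) :
    β - α ≤ a (k - 1) - tail a k :=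
  stmt_0_general a hpos hsum k α β x hx hgap
end

section
/- Let (a_n) be a nonincreasing sequence of positive reals with convergent sum. Every dominating gap of the achievement set A(a_n) is principal, i.e., equals (r_n, a_n) for some n. -/
open Set MeasureTheory Pointwise

/-! ### Auxiliary definitions and lemmas -/

/-- The set of subsums using only indices `≥ m`. -/
def Ages (a : ℕ → ℝ) (m : ℕ) : Set ℝ :=
  {x | ∃ I : Set ℕ, (∀ i ∈ I, m ≤ i) ∧ HasSum (I.indicator a) x}

lemma hasSum_indicator_singleton (a : ℕ → ℝ) (n : ℕ) :
    HasSum (({n} : Set ℕ).indicator a) (a n) := by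
  have h := hasSum_ite_eq n (a n)
  have he : (({n} : Set ℕ).indicator a) = fun i => if i = n then a n else 0 := by
    funext i
    by_cases hi : i = n
    · subst hi; simp [Set.indicator]
    · simp [Set.indicator, hi]
  rw [he]; exact h

lemma tail_hasSum {a : ℕ → ℝ} (hsum : Summable a) (m : ℕ) :
    HasSum ({i : ℕ | m ≤ i}.indicator a) (tail a m) := by
  have h1 : Summable fun i => a (m + i) :=
    ((summable_nat_add_iff m).2 hsum).congr fun i => by rw [Nat.add_comm]
  have h2 : HasSum (fun i => a (m + i)) (tail a m) := h1.hasSum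
  have hinj : Function.Injective (fun i : ℕ => m + i) := fun x y h => by
    have h' : m + x = m + y := h
    omega
  have h0 : ∀ x ∉ Set.range (fun i : ℕ => m + i), ({i : ℕ | m ≤ i}.indicator a) x = 0 := by
    intro x hx
    have hmx : ¬ m ≤ x := by
      intro hmx; exact hx ⟨x - m, show m + (x - m) = x by omega⟩
    simp [Set.indicator, hmx]
  refine (hinj.hasSum_iff h0).mp ?_
  have he : ({i : ℕ | m ≤ i}.indicator a) ∘ (fun i : ℕ => m + i) = fun i => a (m + i) := by
    funext i
    simp [Set.indicator, Nat.le_add_right]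
  rw [he]; exact h2

lemma zero_mem_Ages (a : ℕ → ℝ) (m : ℕ) : (0 : ℝ) ∈ Ages a m :=
  ⟨∅, by simp, by simpa [Set.indicator_empty] using (hasSum_zero : HasSum (fun _ : ℕ => (0:ℝ)) 0)⟩

lemma tail_mem_Ages {a : ℕ → ℝ} (hsum : Summable a) (m : ℕ) : tail a m ∈ Ages a m :=
  ⟨{i | m ≤ i}, fun _ hi => hi, tail_hasSum hsum m⟩

lemma single_mem_Ages (a : ℕ → ℝ) {m n : ℕ} (h : m ≤ n) : a n ∈ Ages a m :=
  ⟨{n}, fun i hi => by simp only [Set.mem_singleton_iff] at hi; omega,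
    hasSum_indicator_singleton a n⟩

lemma Ages_mono {a : ℕ → ℝ} {m m' : ℕ} (h : m ≤ m') : Ages a m' ⊆ Ages a m :=
  fun _ ⟨I, hIm, hI⟩ => ⟨I, fun i hi => le_trans h (hIm i hi), hI⟩

lemma Ages_nonneg {a : ℕ → ℝ} (hnn : ∀ i, 0 ≤ a i) {m : ℕ} {x : ℝ} (hx : x ∈ Ages a m) :
    0 ≤ x := by
  obtain ⟨I, _, hI⟩ := hx
  exact hasSum_le (fun i => Set.indicator_apply_nonneg fun _ => hnn i) hasSum_zero hI

lemma Ages_le_tail {a : ℕ → ℝ} (hsum : Summable a) (hnn : ∀ i, 0 ≤ a i) {m : ℕ} {x : ℝ}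
    (hx : x ∈ Ages a m) : x ≤ tail a m := by
  obtain ⟨I, hIm, hI⟩ := hx
  refine hasSum_le (fun i => ?_) hI (tail_hasSum hsum m)
  by_cases hi : i ∈ I
  · have : m ≤ i := hIm i hi
    simp [Set.indicator, hi, this]
  · rw [Set.indicator_of_notMem hi]; exact Set.indicator_apply_nonneg (fun _ => hnn i)

lemma mem_Ages_shift {a : ℕ → ℝ} (hsum : Summable a) (hnn : ∀ i, 0 ≤ a i) (hmono : Antitone a)
    {m n : ℕ} {x : ℝ} (hx : x ∈ Ages a m) (hlt : x < a n) : x ∈ Ages a (n + 1) := by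
  obtain ⟨I, hIm, hI⟩ := hx
  refine ⟨I, fun i hi => ?_, hI⟩
  by_contra h
  push_neg at h
  have h1 : i ≤ n := by omega
  have h2 : a n ≤ a i := hmono h1
  have h3 : (I.indicator a) i ≤ x :=
    le_hasSum hI i fun j _ => Set.indicator_apply_nonneg fun _ => hnn j
  rw [Set.indicator_of_mem hi] at h3
  linarith

lemma hasSum_diff_singleton {a : ℕ → ℝ} {I : Set ℕ} {x : ℝ} {j : ℕ}
    (hI : HasSum (I.indicator a) x) (hj : j ∈ I) :
    HasSum ((I \ {j}).indicator a) (x - a j) := by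
  have hs := hasSum_indicator_singleton a j
  have h := hI.sub hs
  have he : (I \ {j}).indicator a = fun i => I.indicator a i - ({j} : Set ℕ).indicator a i := by
    funext i
    by_cases h1 : i = j
    · subst h1; simp [Set.indicator, hj]
    · by_cases h2 : i ∈ I <;> simp [Set.indicator, h1, h2]
  rw [he]; exact h

lemma hasSum_insert_set {a : ℕ → ℝ} {I : Set ℕ} {x : ℝ} {j : ℕ}
    (hI : HasSum (I.indicator a) x) (hj : j ∉ I) :
    HasSum ((insert j I).indicator a) (x + a j) := by
  have hs := hasSum_indicator_singleton a j
  have h := hI.add hs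
  have he : (insert j I).indicator a = fun i => I.indicator a i + ({j} : Set ℕ).indicator a i := by
    funext i
    by_cases h1 : i = j
    · subst h1; simp [Set.indicator, hj]
    · by_cases h2 : i ∈ I <;> simp [Set.indicator, h1, h2]
  rw [he]; exact h

lemma isCompact_Ages {a : ℕ → ℝ} (hsum : Summable a) (hnn : ∀ i, 0 ≤ a i) (m : ℕ) :
    IsCompact (Ages a m) := by
  classical
  set b : ℕ → ℝ := ({i : ℕ | m ≤ i}).indicator a with hb
  have hbsum : Summable b := hsum.indicator _
  have hbnn : ∀ i, 0 ≤ b i := fun i => Set.indicator_apply_nonneg fun _ => hnn i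
  have hcont : Continuous (fun f : ℕ → Bool => ∑' i, if f i then b i else 0) := by
    refine continuous_tsum (fun i => ?_) hbsum (fun n x => ?_)
    · exact (continuous_of_discreteTopology
        (f := fun v : Bool => if v then b i else 0)).comp (continuous_apply i)
    · rw [Real.norm_eq_abs]
      split
      · rw [abs_of_nonneg (hbnn n)]
      · simpa using hbnn n
  have hrange : Ages a m = Set.range (fun f : ℕ → Bool => ∑' i, if f i then b i else 0) := by
    ext x
    constructor
    · rintro ⟨I, hIm, hI⟩
      refine ⟨fun i => decide (i ∈ I), ?_⟩
      have he : (fun i => if (decide (i ∈ I) : Bool) then b i else 0) = I.indicator a := by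
        funext i
        by_cases h : i ∈ I
        · simp [h, hb, Set.indicator, hIm i h]
        · simp [h, Set.indicator]
      simp only [he]
      exact hI.tsum_eq
    · rintro ⟨f, rfl⟩
      refine ⟨{i | f i = true ∧ m ≤ i}, fun i hi => hi.2, ?_⟩
      have he : ({i | f i = true ∧ m ≤ i} : Set ℕ).indicator a
          = fun i => if f i then b i else 0 := by
        funext i
        by_cases h1 : f i = true <;> by_cases h2 : m ≤ i <;>
          simp [Set.indicator, h1, h2, hb]
      have hs2 : Summable (({i | f i = true ∧ m ≤ i} : Set ℕ).indicator a) := hsum.indicator _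
      have h3 := hs2.hasSum
      rw [he] at h3 ⊢
      exact h3
  rw [hrange]
  exact isCompact_range hcont

lemma achievementSet_eq_Ages (a : ℕ → ℝ) : achievementSet a = Ages a 0 := by
  ext x
  constructor
  · rintro ⟨I, hI⟩
    exact ⟨I, fun i _ => Nat.zero_le i, hasSum_subtype_iff_indicator.mp hI⟩
  · rintro ⟨I, _, hI⟩
    exact ⟨I, hasSum_subtype_iff_indicator.mpr hI⟩

/-- The key recursion: given a gap of `Ages a m` of length at least `L`, there is an
index `N ≥ m` such that the principal gap `(tail a (N+1), a N)` is at least as long and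
`tail a (N+1)` lies at or left of the gap's left endpoint. -/
lemma Ages_gap_rec (a : ℕ → ℝ) (hpos : ∀ n, 0 < a n) (hmono : Antitone a) (hsum : Summable a)
    (L : ℝ) (hL : 0 < L) (K : ℕ) (hK : ∀ j, K ≤ j → a j < L)
    (m : ℕ) (α' β' : ℝ) (h1 : α' ∈ Ages a m) (h2 : β' ∈ Ages a m)
    (h3 : α' + L ≤ β') (h4 : ∀ t ∈ Ages a m, t ≤ α' ∨ β' ≤ t) :
    ∃ N, m ≤ N ∧ tail a (N + 1) ≤ α' ∧ tail a (N + 1) + β' ≤ α' + a N := by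
  have hnn : ∀ i, 0 ≤ a i := fun i => (hpos i).le
  have hα'nn : 0 ≤ α' := Ages_nonneg hnn h1
  have hβpos : 0 < β' := by linarith
  obtain ⟨I, hIm, hI⟩ := h2
  have hIne : I.Nonempty := by
    by_contra h
    rw [Set.not_nonempty_iff_eq_empty] at h
    rw [h, Set.indicator_empty] at hI
    have := hI.unique hasSum_zero
    linarith
  have hnI : sInf I ∈ I := Nat.sInf_mem hIne
  set n := sInf I with hn
  have hmn : m ≤ n := hIm n hnI
  set c := β' - a n with hc
  have hcmem : c ∈ Ages a (n + 1) := by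
    refine ⟨I \ {n}, fun i hi => ?_, hasSum_diff_singleton hI hnI⟩
    have h5 : n ≤ i := Nat.sInf_le hi.1
    have h6 : i ≠ n := hi.2
    omega
  have hcnonneg : 0 ≤ c := Ages_nonneg hnn hcmem
  have hclt : c < β' := by have := hpos n; simp only [hc]; linarith
  have hcα : c ≤ α' := by
    have hcm : c ∈ Ages a m := Ages_mono (by omega) hcmem
    rcases h4 c hcm with h | h
    · exact h
    · linarith
  have hanL : L ≤ a n := by simp only [hc] at hcα; linarith
  have hnK : n < K := by
    by_contra h
    push_neg at h
    have := hK n h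
    linarith
  rcases eq_or_lt_of_le hcnonneg with hc0 | hcpos
  · -- case `c = 0`, i.e. `β' = a n`
    have hβan : β' = a n := by simp only [hc] at hc0; linarith
    have hα'lt : α' < a n := by linarith
    have hα'mem : α' ∈ Ages a (n + 1) := mem_Ages_shift hsum hnn hmono h1 hα'lt
    by_cases hr : tail a (n + 1) < a n
    · -- base case: principal gap found
      have htm : tail a (n + 1) ∈ Ages a m := Ages_mono (by omega) (tail_mem_Ages hsum (n + 1))
      have h5 : tail a (n + 1) ≤ α' := by
        rcases h4 _ htm with h | h
        · exact h
        · linarith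
      have h6 : α' ≤ tail a (n + 1) := Ages_le_tail hsum hnn hα'mem
      exact ⟨n, hmn, h5, by linarith⟩
    · -- extend the gap to the right inside `Ages a (n+1)`
      push_neg at hr
      set T := Ages a (n + 1) ∩ Set.Icc (a n) (tail a (n + 1)) with hT
      have hTne : T.Nonempty := ⟨tail a (n + 1), tail_mem_Ages hsum _, hr, le_refl _⟩
      have hTclosed : IsClosed T :=
        ((isCompact_Ages hsum hnn (n + 1)).isClosed).inter isClosed_Icc
      have hTbdd : BddBelow T := ⟨a n, fun t ht => ht.2.1⟩
      have hβ''T : sInf T ∈ T := hTclosed.csInf_mem hTne hTbdd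
      set β'' := sInf T with hβ''
      have hgap' : ∀ t ∈ Ages a (n + 1), t ≤ α' ∨ β'' ≤ t := by
        intro t ht
        by_cases h5 : t < a n
        · left
          rcases h4 t (Ages_mono (by omega) ht) with h | h
          · exact h
          · linarith
        · right
          push_neg at h5
          exact csInf_le hTbdd ⟨ht, h5, Ages_le_tail hsum hnn ht⟩
      have hlen : α' + L ≤ β'' := by
        have := hβ''T.2.1
        linarith
      obtain ⟨N, hN1, hN2, hN3⟩ := Ages_gap_rec a hpos hmono hsum L hL K hK
        (n + 1) α' β'' hα'mem hβ''T.1 hlen hgap'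
      refine ⟨N, by omega, hN2, ?_⟩
      have := hβ''T.2.1
      linarith
  · -- case `c > 0`: translate the gap down by `a n`
    have hfree : ∀ t ∈ Ages a (n + 1), t ≤ α' - a n ∨ c ≤ t := by
      rintro t ⟨J, hJm, hJ⟩
      have hnJ : n ∉ J := fun h => by have := hJm n h; omega
      have htan : t + a n ∈ Ages a m := by
        refine ⟨insert n J, fun i hi => ?_, hasSum_insert_set hJ hnJ⟩
        rcases hi with hi | hi
        · omega
        · have := hJm i hi; omega
      rcases h4 _ htan with h | h
      · left; linarith
      · right; simp only [hc]; linarith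
    have hα'an : a n ≤ α' := by
      rcases hfree 0 (zero_mem_Ages a _) with h | h
      · linarith
      · linarith
    set T' := Ages a (n + 1) ∩ Set.Icc 0 (α' - a n) with hT'
    have hT'ne : T'.Nonempty := ⟨0, zero_mem_Ages a _, le_refl _, by linarith⟩
    have hT'closed : IsClosed T' :=
      ((isCompact_Ages hsum hnn (n + 1)).isClosed).inter isClosed_Icc
    have hT'bdd : BddAbove T' := ⟨α' - a n, fun t ht => ht.2.2⟩
    have hα''T' : sSup T' ∈ T' := hT'closed.csSup_mem hT'ne hT'bdd
    set α'' := sSup T' with hα''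
    have hgap'' : ∀ t ∈ Ages a (n + 1), t ≤ α'' ∨ c ≤ t := by
      intro t ht
      rcases hfree t ht with h | h
      · left; exact le_csSup hT'bdd ⟨ht, Ages_nonneg hnn ht, h⟩
      · right; exact h
    have hlen'' : α'' + L ≤ c := by
      have := hα''T'.2.2
      simp only [hc]
      linarith
    obtain ⟨N, hN1, hN2, hN3⟩ := Ages_gap_rec a hpos hmono hsum L hL K hK
      (n + 1) α'' c hα''T'.1 hcmem hlen'' hgap''
    refine ⟨N, by omega, ?_, ?_⟩
    · have := hα''T'.2.2; linarith
    · have := hα''T'.2.2; simp only [hc] at hN3 ⊢; linarith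
termination_by K - m
decreasing_by all_goals omega

section CompStruct

variable {A : Set ℝ} {S : ℝ}

lemma comp_struct (hA : IsClosed A) (h0 : (0 : ℝ) ∈ A) (hS : S ∈ A)
    {y : ℝ} (hy : y ∈ Set.Icc 0 S \ A) :
    ∃ p q, p ∈ A ∧ q ∈ A ∧ p < y ∧ y < q ∧
      connectedComponentIn (Set.Icc 0 S \ A) y = Set.Ioo p q := by
  set U := Set.Icc 0 S \ A with hU
  have hUsub : U ⊆ Set.Ioo 0 S := by
    rintro t ⟨⟨ht1, ht2⟩, ht3⟩
    rcases eq_or_lt_of_le ht1 with h | h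
    · exact absurd (h ▸ h0) ht3
    rcases eq_or_lt_of_le ht2 with h' | h'
    · exact absurd (h' ▸ hS) ht3
    exact ⟨h, h'⟩
  have hUopen : IsOpen U := by
    have he : U = Set.Ioo 0 S \ A := by
      ext t
      exact ⟨fun ht => ⟨hUsub ht, ht.2⟩, fun ht => ⟨Set.Ioo_subset_Icc_self ht.1, ht.2⟩⟩
    rw [he]
    exact isOpen_Ioo.sdiff hA
  set C := connectedComponentIn U y with hC
  have hCopen : IsOpen C := hUopen.connectedComponentIn
  have hCU : C ⊆ U := connectedComponentIn_subset _ _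
  have hyC : y ∈ C := mem_connectedComponentIn hy
  have hCne : C.Nonempty := ⟨y, hyC⟩
  have hCpre : IsPreconnected C := isPreconnected_connectedComponentIn
  have hCsub : C ⊆ Set.Icc 0 S := fun t ht => Set.Ioo_subset_Icc_self (hUsub (hCU ht))
  have hbddB : BddBelow C := ⟨0, fun t ht => (hCsub ht).1⟩
  have hbddA : BddAbove C := ⟨S, fun t ht => (hCsub ht).2⟩
  set p := sInf C with hp
  set q := sSup C with hq
  have hCIoo : C = Set.Ioo p q := by
    apply Set.Subset.antisymm
    · intro z hz
      obtain ⟨ε, hε, hball⟩ := Metric.isOpen_iff.mp hCopen z hz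
      have hz1 : z - ε / 2 ∈ C := by
        apply hball
        rw [Metric.mem_ball, Real.dist_eq]
        rw [abs_of_nonpos (by linarith)]
        linarith
      have hz2 : z + ε / 2 ∈ C := by
        apply hball
        rw [Metric.mem_ball, Real.dist_eq]
        rw [abs_of_nonneg (by linarith)]
        linarith
      constructor
      · have := csInf_le hbddB hz1; simp only [← hp] at this ⊢; linarith
      · have := le_csSup hbddA hz2; simp only [← hq] at this ⊢; linarith
    · intro t ht
      obtain ⟨u, huC, hu⟩ := exists_lt_of_csInf_lt hCne ht.1
      obtain ⟨v, hvC, hv⟩ := exists_lt_of_lt_csSup hCne ht.2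
      exact (hCpre.ordConnected).out huC hvC ⟨hu.le, hv.le⟩
  have hpy : p < y := by rw [hCIoo] at hyC; exact hyC.1
  have hyq : y < q := by rw [hCIoo] at hyC; exact hyC.2
  have hpIcc : p ∈ Set.Icc 0 S := by
    constructor
    · exact le_csInf hCne fun t ht => (hCsub ht).1
    · exact le_trans (csInf_le hbddB hyC) (hCsub hyC).2
  have hqIcc : q ∈ Set.Icc 0 S := by
    constructor
    · exact le_trans (hCsub hyC).1 (le_csSup hbddA hyC)
    · exact csSup_le hCne fun t ht => (hCsub ht).2
  have hpA : p ∈ A := by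
    by_contra hpA
    have hpU : p ∈ U := ⟨hpIcc, hpA⟩
    obtain ⟨ε, hε, hball⟩ := Metric.isOpen_iff.mp hUopen p hpU
    have hDU : Set.Ioo (p - ε) (p + ε) ⊆ U := by
      intro t ht
      apply hball
      rw [Metric.mem_ball, Real.dist_eq, abs_lt]
      exact ⟨by linarith [ht.1], by linarith [ht.2]⟩
    set w := (p + min (p + ε) q) / 2 with hw
    have hwgt : p < min (p + ε) q := lt_min (by linarith) (hpy.trans hyq)
    have hw1 : p < w := by simp only [hw]; linarith
    have hw2 : w < p + ε := by
      have : w < min (p + ε) q := by simp only [hw]; linarith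
      exact this.trans_le (min_le_left _ _)
    have hw3 : w < q := by
      have : w < min (p + ε) q := by simp only [hw]; linarith
      exact this.trans_le (min_le_right _ _)
    have hunion : IsPreconnected (Set.Ioo (p - ε) (p + ε) ∪ Set.Ioo p q) :=
      IsPreconnected.union w ⟨by linarith, hw2⟩ ⟨hw1, hw3⟩ isPreconnected_Ioo isPreconnected_Ioo
    have hsubU : Set.Ioo (p - ε) (p + ε) ∪ Set.Ioo p q ⊆ U :=
      Set.union_subset hDU (hCIoo ▸ hCU)
    have hsubC : Set.Ioo (p - ε) (p + ε) ∪ Set.Ioo p q ⊆ C :=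
      hunion.subset_connectedComponentIn (Or.inr ⟨hpy, hyq⟩) hsubU
    have h5 : p - ε / 2 ∈ C := hsubC (Or.inl ⟨by linarith, by linarith⟩)
    have h6 := csInf_le hbddB h5
    simp only [← hp] at h6
    linarith
  have hqA : q ∈ A := by
    by_contra hqA
    have hqU : q ∈ U := ⟨hqIcc, hqA⟩
    obtain ⟨ε, hε, hball⟩ := Metric.isOpen_iff.mp hUopen q hqU
    have hDU : Set.Ioo (q - ε) (q + ε) ⊆ U := by
      intro t ht
      apply hball
      rw [Metric.mem_ball, Real.dist_eq, abs_lt]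
      exact ⟨by linarith [ht.1], by linarith [ht.2]⟩
    set w := (max (q - ε) p + q) / 2 with hw
    have hwlt : max (q - ε) p < q := max_lt (by linarith) (hpy.trans hyq)
    have hw1 : w < q := by simp only [hw]; linarith
    have hw2 : q - ε < w := by
      have : max (q - ε) p < w := by simp only [hw]; linarith
      exact (le_max_left _ _).trans_lt this
    have hw3 : p < w := by
      have : max (q - ε) p < w := by simp only [hw]; linarith
      exact (le_max_right _ _).trans_lt this
    have hunion : IsPreconnected (Set.Ioo (q - ε) (q + ε) ∪ Set.Ioo p q) :=
      IsPreconnected.union w ⟨hw2, by linarith⟩ ⟨hw3, hw1⟩ isPreconnected_Ioo isPreconnected_Ioo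
    have hsubU : Set.Ioo (q - ε) (q + ε) ∪ Set.Ioo p q ⊆ U :=
      Set.union_subset hDU (hCIoo ▸ hCU)
    have hsubC : Set.Ioo (q - ε) (q + ε) ∪ Set.Ioo p q ⊆ C :=
      hunion.subset_connectedComponentIn (Or.inr ⟨hpy, hyq⟩) hsubU
    have h5 : q + ε / 2 ∈ C := hsubC (Or.inl ⟨by linarith, by linarith⟩)
    have h6 := le_csSup hbddA h5
    simp only [← hq] at h6
    linarith
  exact ⟨p, q, hpA, hqA, hpy, hyq, hCIoo⟩

lemma comp_unique (hA : IsClosed A) (h0 : (0 : ℝ) ∈ A) (hS : S ∈ A)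
    {p q y : ℝ} (hp : p ∈ A) (hq : q ∈ A) (hy : y ∈ Set.Ioo p q)
    (hsub : Set.Ioo p q ⊆ Set.Icc 0 S \ A) :
    connectedComponentIn (Set.Icc 0 S \ A) y = Set.Ioo p q := by
  have hyU : y ∈ Set.Icc 0 S \ A := hsub hy
  obtain ⟨p', q', hp'A, hq'A, hp'y, hyq', hC⟩ := comp_struct hA h0 hS hyU
  have hsub2 : Set.Ioo p q ⊆ Set.Ioo p' q' := by
    rw [← hC]
    exact isPreconnected_Ioo.subset_connectedComponentIn hy hsub
  have hpq : p < q := hy.1.trans hy.2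
  have h1 := (Set.Ioo_subset_Ioo_iff hpq).mp hsub2
  have hdisj : ∀ t ∈ A, t ∉ Set.Ioo p' q' := by
    intro t ht hmem
    have : t ∈ Set.Icc 0 S \ A := (hC ▸ connectedComponentIn_subset _ _) hmem
    exact this.2 ht
  have hpeq : p' = p := by
    rcases eq_or_lt_of_le h1.1 with h | h
    · exact h
    · exact absurd (hdisj p hp ⟨h, hy.1.trans hyq'⟩) (by simp)
  have hqeq : q' = q := by
    rcases eq_or_lt_of_le h1.2 with h | h
    · exact h.symm
    · exact absurd (hdisj q hq ⟨hp'y.trans hy.2, h⟩) (by simp)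
  rw [hC, hpeq, hqeq]

end CompStruct

/-- Every dominating gap of the achievement set is a principal gap
(r_n, a_n) (here (tail a (n+1), a n) with 0-indexing). A gap is a connected
component of the complement of the achievement set inside [0, sum]; it is
dominating if every gap lying entirely to its left has strictly smaller diameter. -/
theorem stmt_1 (a : ℕ → ℝ) (hpos : ∀ n, 0 < a n) (hmono : Antitone a)
    (hsum : Summable a) (G : Set ℝ) (x : ℝ)
    (hx : x ∈ Set.Icc 0 (∑' n, a n) \ achievementSet a)
    (hG : G = connectedComponentIn (Set.Icc 0 (∑' n, a n) \ achievementSet a) x)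
    (hdom : ∀ (G' : Set ℝ) (y : ℝ),
      y ∈ Set.Icc 0 (∑' n, a n) \ achievementSet a →
      G' = connectedComponentIn (Set.Icc 0 (∑' n, a n) \ achievementSet a) y →
      (∀ u ∈ G', ∀ v ∈ G, u < v) → Metric.diam G' < Metric.diam G) :
    ∃ n : ℕ, G = Set.Ioo (tail a (n + 1)) (a n) := by
  classical
  have hnn : ∀ i, 0 ≤ a i := fun i => (hpos i).le
  have hA0 : achievementSet a = Ages a 0 := achievementSet_eq_Ages a
  have hAclosed : IsClosed (achievementSet a) := by
    rw [hA0]; exact (isCompact_Ages hsum hnn 0).isClosed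
  have htail0 : tail a 0 = ∑' n, a n := by
    unfold tail
    exact tsum_congr fun i => by rw [Nat.zero_add]
  have h0A : (0 : ℝ) ∈ achievementSet a := by
    rw [hA0]; exact zero_mem_Ages a 0
  have hSA : (∑' n, a n) ∈ achievementSet a := by
    rw [hA0, ← htail0]; exact tail_mem_Ages hsum 0
  obtain ⟨α, β, hαA, hβA, hαx, hxβ, hGeq⟩ := comp_struct hAclosed h0A hSA hx
  have hGIoo : G = Set.Ioo α β := by rw [hG, hGeq]
  have hαβ : α < β := hαx.trans hxβ
  set L := β - α with hL
  have hLpos : 0 < L := by simp only [hL]; linarith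
  have hgap0 : ∀ t ∈ Ages a 0, t ≤ α ∨ β ≤ t := by
    intro t ht
    by_contra h
    push_neg at h
    have htG : t ∈ connectedComponentIn (Set.Icc 0 (∑' n, a n) \ achievementSet a) x := by
      rw [hGeq]; exact ⟨h.1, h.2⟩
    have := (connectedComponentIn_subset _ _) htG
    exact this.2 (hA0 ▸ ht)
  obtain ⟨K, hK⟩ : ∃ K, ∀ j, K ≤ j → a j < L := by
    have h2 : ∀ᶠ j in Filter.atTop, a j < L :=
      Filter.Tendsto.eventually_lt_const hLpos hsum.tendsto_atTop_zero
    exact Filter.eventually_atTop.mp h2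
  obtain ⟨N, hN0, hNr, hNlen⟩ := Ages_gap_rec a hpos hmono hsum L hLpos K hK
    0 α β (hA0 ▸ hαA) (hA0 ▸ hβA) (by simp only [hL]; linarith) hgap0
  have hrltaN : tail a (N + 1) < a N := by linarith
  have haNA : a N ∈ achievementSet a := by
    rw [hA0]; exact single_mem_Ages a (Nat.zero_le N)
  have hrA : tail a (N + 1) ∈ achievementSet a := by
    rw [hA0]; exact Ages_mono (Nat.zero_le _) (tail_mem_Ages hsum (N + 1))
  have haNS : a N ≤ ∑' n, a n := by
    rw [← htail0]; exact Ages_le_tail hsum hnn (hA0 ▸ haNA)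
  have htnn : 0 ≤ tail a (N + 1) := Ages_nonneg hnn (tail_mem_Ages hsum (N + 1))
  have hPU : Set.Ioo (tail a (N + 1)) (a N) ⊆ Set.Icc 0 (∑' n, a n) \ achievementSet a := by
    intro t ht
    refine ⟨⟨(htnn.trans ht.1.le), ht.2.le.trans haNS⟩, ?_⟩
    intro htA
    have h5 : t ∈ Ages a (N + 1) := mem_Ages_shift hsum hnn hmono (hA0 ▸ htA) ht.2
    have h6 : t ≤ tail a (N + 1) := Ages_le_tail hsum hnn h5
    linarith [ht.1]
  by_cases hcase : α < a N
  · -- the principal gap intersects `G`, hence equals `G`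
    set z := (α + min (a N) β) / 2 with hz
    have hmin : α < min (a N) β := lt_min hcase hαβ
    have hz1 : α < z := by simp only [hz]; linarith
    have hz2 : z < min (a N) β := by simp only [hz]; linarith
    have hzaN : z < a N := hz2.trans_le (min_le_left _ _)
    have hzβ : z < β := hz2.trans_le (min_le_right _ _)
    have hzP : z ∈ Set.Ioo (tail a (N + 1)) (a N) := ⟨lt_of_le_of_lt hNr hz1, hzaN⟩
    have h7 : connectedComponentIn (Set.Icc 0 (∑' n, a n) \ achievementSet a) z
        = Set.Ioo (tail a (N + 1)) (a N) :=
      comp_unique hAclosed h0A hSA hrA haNA hzP hPU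
    have hzG : z ∈ connectedComponentIn (Set.Icc 0 (∑' n, a n) \ achievementSet a) x := by
      rw [hGeq]; exact ⟨hz1, hzβ⟩
    have h8 := connectedComponentIn_eq hzG
    exact ⟨N, hG.trans (h8.trans h7)⟩
  · -- the principal gap lies strictly to the left of `G`: contradiction with domination
    push_neg at hcase
    set y := (tail a (N + 1) + a N) / 2 with hy
    have hyP : y ∈ Set.Ioo (tail a (N + 1)) (a N) := by
      constructor <;> (simp only [hy]; linarith)
    have hyU : y ∈ Set.Icc 0 (∑' n, a n) \ achievementSet a := hPU hyP
    have hcomp : connectedComponentIn (Set.Icc 0 (∑' n, a n) \ achievementSet a) y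
        = Set.Ioo (tail a (N + 1)) (a N) :=
      comp_unique hAclosed h0A hSA hrA haNA hyP hPU
    have hlt : ∀ u ∈ Set.Ioo (tail a (N + 1)) (a N), ∀ v ∈ G, u < v := by
      intro u hu v hv
      rw [hGIoo] at hv
      exact hu.2.trans_le (hcase.trans hv.1.le)
    have hd := hdom (Set.Ioo (tail a (N + 1)) (a N)) y hyU hcomp.symm hlt
    rw [Real.diam_Ioo hrltaN.le, hGIoo, Real.diam_Ioo hαβ.le] at hd
    exfalso
    linarith
end

section
/- A bounded set A ⊆ ℝ is a Cantorval if and only if A is regularly closed (A equals the closure of its interior) and the boundary of A is homeomorphic to the Cantor set (i.e., the boundary is a nonempty compact perfect nowhere dense set). -/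
open Set MeasureTheory Pointwise

/-!
When `A ⊆ ℝ` is compact, a point of `frontier A` is either an endpoint of a nondegenerate
component of `A` or a one-point component of `A`, and both kinds of points do lie in
`frontier A`. Distinct nondegenerate components are disjoint intervals, so there are only
countably many of them and countably many endpoints. If `frontier A` is perfect, it is
uncountable near each of its points, so one-point components accumulate at every endpoint.
Conversely, let `A` be a Cantorval. An endpoint of a nondegenerate component is approached by
one-point components. A one-point component `{x}` is approached by interior points `w`, and
`w` lies in a different component, one of whose endpoints lies between `x` and `w`.
-/

open Topology

theorem IsClosed.connectedComponentIn {X : Type*} [TopologicalSpace X] {A : Set X}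
    (hA : IsClosed A) (x : X) : IsClosed (connectedComponentIn A x) := by
  by_cases hx : x ∈ A
  · exact isClosed_of_closure_subset <|
      isPreconnected_connectedComponentIn.closure.subset_connectedComponentIn
        (subset_closure (mem_connectedComponentIn hx))
        (closure_minimal (connectedComponentIn_subset A x) hA)
  · rw [connectedComponentIn_eq_empty hx]
    exact isClosed_empty

theorem Perfect.not_countable {X : Type*} [MetricSpace X] [CompleteSpace X] {C : Set X}
    (hC : Perfect C) (hne : C.Nonempty) : ¬ C.Countable := by
  intro hCc
  obtain ⟨f, hfC, -, hf⟩ := hC.exists_nat_bool_injection hne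
  have : Countable (ℕ → Bool) := countable_univ_iff.1 <|
    MapsTo.countable_of_injOn (fun x _ => hfC (mem_range_self x)) hf.injOn hCc
  rw [← Cardinal.mk_le_aleph0_iff] at this
  simpa using this.trans_lt Cardinal.aleph0_lt_continuum

theorem Perfect.exists_ne_notMem_of_countable {X : Type*} [MetricSpace X] [CompleteSpace X]
    {C E U : Set X} {y : X} (hC : Perfect C) (hy : y ∈ C) (hU : U ∈ 𝓝 y) (hE : E.Countable) :
    ∃ z ∈ U ∩ C, z ≠ y ∧ z ∉ E := by
  obtain ⟨V, hV, hVc, hVU⟩ := exists_mem_nhds_isClosed_subset hU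
  obtain ⟨hD, hDne⟩ :=
    hC.closure_nhds_inter y hy (mem_interior_iff_mem_nhds.2 hV) isOpen_interior
  have hDV : closure (interior V ∩ C) ⊆ V ∩ C :=
    closure_minimal (inter_subset_inter_left _ interior_subset) (hVc.inter hC.closed)
  by_contra! h
  refine hD.not_countable hDne ((hE.insert y).mono fun z hz => ?_)
  exact (eq_or_ne z y).imp id (h z ⟨hVU (hDV hz).1, (hDV hz).2⟩)

section ConditionallyCompleteLinearOrder

variable {α : Type*} [ConditionallyCompleteLinearOrder α] [TopologicalSpace α] [OrderTopology α]
  {A : Set α} {x : α}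

theorem notMem_interior_of_connectedComponentIn_eq_singleton [DenselyOrdered α] [NoMaxOrder α]
    (h : connectedComponentIn A x = {x}) : x ∉ interior A := by
  intro hx
  obtain ⟨u, hxu, hu⟩ :=
    exists_Ico_subset_of_mem_nhds (mem_interior_iff_mem_nhds.1 hx) (exists_gt x)
  obtain ⟨y, hxy, hyu⟩ := exists_between hxu
  have hy := isPreconnected_Ico.subset_connectedComponentIn (left_mem_Ico.2 hxu) hu
    ⟨hxy.le, hyu⟩
  rw [h] at hy
  exact hxy.ne' hy

theorem countable_image_connectedComponentIn_nontrivial [DenselyOrdered α]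
    [TopologicalSpace.SeparableSpace α] (A : Set α) :
    (connectedComponentIn A '' {x | (connectedComponentIn A x).Nontrivial}).Countable := by
  refine PairwiseDisjoint.countable_of_nonempty_interior (s := id) ?_ ?_
  · rintro _ ⟨x, -, rfl⟩ _ ⟨y, -, rfl⟩ hxy
    refine disjoint_left.2 fun z hzx hzy => hxy ?_
    rw [connectedComponentIn_eq hzx, connectedComponentIn_eq hzy]
  · rintro _ ⟨x, hx, rfl⟩
    obtain ⟨a, ha, b, hb, hab⟩ := hx.exists_lt
    obtain ⟨c, hac, hcb⟩ := exists_between hab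
    exact ⟨c, interior_maximal
      (Ioo_subset_Icc_self.trans (isPreconnected_connectedComponentIn.Icc_subset ha hb))
      isOpen_Ioo ⟨hac, hcb⟩⟩

theorem IsPreconnected.inter_frontier_subset {T : Set α} (hT : IsPreconnected T) (hTA : T ⊆ A)
    (hb : BddBelow T) (ha : BddAbove T) : T ∩ frontier A ⊆ {sInf T, sSup T} := by
  rintro z ⟨hzT, hzA⟩
  by_contra hz
  simp only [mem_insert_iff, mem_singleton_iff, not_or] at hz
  have hzI : z ∈ Ioo (sInf T) (sSup T) :=
    ⟨(csInf_le hb hzT).lt_of_ne' hz.1, (le_csSup ha hzT).lt_of_ne hz.2⟩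
  exact hzA.2 <| interior_maximal
    ((IsConnected.Ioo_csInf_csSup_subset ⟨⟨z, hzT⟩, hT⟩ hb ha).trans hTA) isOpen_Ioo hzI

theorem countable_setOf_mem_frontier_connectedComponentIn_nontrivial [DenselyOrdered α]
    [TopologicalSpace.SeparableSpace α] (hb : BddBelow A) (ha : BddAbove A) :
    {z | z ∈ frontier A ∧ (connectedComponentIn A z).Nontrivial}.Countable := by
  refine ((countable_image_connectedComponentIn_nontrivial A).biUnion
    fun C _ => (countable_singleton (sSup C)).insert (sInf C)).mono ?_
  rintro z ⟨hzF, hnt⟩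
  have hzA : z ∈ A := connectedComponentIn_nonempty_iff.1 hnt.nonempty
  have hsub := connectedComponentIn_subset A z
  exact mem_biUnion (mem_image_of_mem _ hnt)
    (isPreconnected_connectedComponentIn.inter_frontier_subset hsub (hb.mono hsub)
      (ha.mono hsub) ⟨mem_connectedComponentIn hzA, hzF⟩)

theorem csInf_connectedComponentIn_mem (hA : IsClosed A) (hb : BddBelow A) (hx : x ∈ A) :
    sInf (connectedComponentIn A x) ∈ connectedComponentIn A x :=
  (hA.connectedComponentIn x).csInf_mem ⟨x, mem_connectedComponentIn hx⟩
    (hb.mono (connectedComponentIn_subset A x))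

theorem csInf_connectedComponentIn_mem_frontier [DenselyOrdered α] [NoMinOrder α]
    (hA : IsClosed A) (hb : BddBelow A) (hx : x ∈ A) :
    sInf (connectedComponentIn A x) ∈ frontier A := by
  set C := connectedComponentIn A x
  have hmem : sInf C ∈ C := csInf_connectedComponentIn_mem hA hb hx
  refine ⟨subset_closure (connectedComponentIn_subset A x hmem), fun hint => ?_⟩
  obtain ⟨l, hl, hlA⟩ :=
    exists_Ioc_subset_of_mem_nhds (mem_interior_iff_mem_nhds.1 hint) (exists_lt _)
  obtain ⟨y, hly, hy⟩ := exists_between hl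
  have hsub : Ioc l (sInf C) ∪ C ⊆ C :=
    (isPreconnected_Ioc.union (sInf C) (right_mem_Ioc.2 hl) hmem
      isPreconnected_connectedComponentIn).subset_connectedComponentIn
      (Or.inr (mem_connectedComponentIn hx)) (union_subset hlA (connectedComponentIn_subset A x))
  exact (csInf_le (hb.mono (connectedComponentIn_subset A x))
    (hsub (Or.inl ⟨hly, hy.le⟩))).not_gt hy

theorem csSup_connectedComponentIn_mem_frontier [DenselyOrdered α] [NoMaxOrder α]
    (hA : IsClosed A) (ha : BddAbove A) (hx : x ∈ A) :
    sSup (connectedComponentIn A x) ∈ frontier A :=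
  csInf_connectedComponentIn_mem_frontier (α := αᵒᵈ) hA ha hx

theorem exists_mem_frontier_Ioc_of_notMem_connectedComponentIn [DenselyOrdered α]
    [NoMinOrder α] (hA : IsClosed A) (hb : BddBelow A) {w : α} (hw : w ∈ A) (hxw : x < w)
    (hwx : w ∉ connectedComponentIn A x) : ∃ z ∈ frontier A, z ∈ Ioc x w := by
  have hmem := csInf_connectedComponentIn_mem hA hb hw
  refine ⟨_, csInf_connectedComponentIn_mem_frontier hA hb hw, ?_,
    csInf_le (hb.mono (connectedComponentIn_subset A w)) (mem_connectedComponentIn hw)⟩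
  by_contra! hle
  have hx : x ∈ connectedComponentIn A w := isPreconnected_connectedComponentIn.Icc_subset
    hmem (mem_connectedComponentIn hw) ⟨hle, hxw.le⟩
  rw [← connectedComponentIn_eq hx] at hwx
  exact hwx (mem_connectedComponentIn hw)

theorem exists_mem_frontier_uIcc_ne_of_notMem_connectedComponentIn [DenselyOrdered α]
    [NoMinOrder α] [NoMaxOrder α] (hA : IsClosed A) (hb : BddBelow A) (ha : BddAbove A)
    (hx : x ∈ A) {w : α} (hw : w ∈ A) (hwx : w ∉ connectedComponentIn A x) :
    ∃ z ∈ frontier A, z ∈ uIcc x w ∧ z ≠ x := by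
  rcases lt_trichotomy x w with hxw | rfl | hwx'
  · obtain ⟨z, hz, hxz, hzw⟩ :=
      exists_mem_frontier_Ioc_of_notMem_connectedComponentIn hA hb hw hxw hwx
    exact ⟨z, hz, Icc_subset_uIcc ⟨hxz.le, hzw⟩, hxz.ne'⟩
  · exact absurd (mem_connectedComponentIn hx) hwx
  · obtain ⟨z, hz, hzx, hwz⟩ :=
      exists_mem_frontier_Ioc_of_notMem_connectedComponentIn (α := αᵒᵈ) hA ha hw hwx' hwx
    exact ⟨z, hz, Icc_subset_uIcc' ⟨hwz, hzx.le⟩, hzx.ne'⟩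

end ConditionallyCompleteLinearOrder

theorem IsCantorval.perfect_frontier {P : Set ℝ} (hP : IsCantorval P) :
    Perfect (frontier P) := by
  obtain ⟨-, hcomp, hreg, hend⟩ := hP
  have hcl := hcomp.isClosed
  refine ⟨isClosed_frontier, preperfect_iff_nhds.2 fun x hx U hU => ?_⟩
  obtain ⟨ε, hε, hεU⟩ := Metric.mem_nhds_iff.1 hU
  have hxP := hcl.frontier_subset hx
  by_cases hnt : (connectedComponentIn P x).Nontrivial
  · have hsub := connectedComponentIn_subset P x
    obtain ⟨z, hzP, hzx, hzε, hz⟩ := hend x hxP hnt x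
      (isPreconnected_connectedComponentIn.inter_frontier_subset hsub (hcomp.bddBelow.mono hsub)
        (hcomp.bddAbove.mono hsub) ⟨mem_connectedComponentIn hxP, hx⟩) ε hε
    refine ⟨z, ⟨hεU ?_, subset_closure hzP,
      notMem_interior_of_connectedComponentIn_eq_singleton hz⟩, hzx⟩
    rwa [Metric.mem_ball, Real.dist_eq]
  · have hx1 : connectedComponentIn P x = {x} :=
      (not_nontrivial_iff.1 hnt).eq_singleton_of_mem (mem_connectedComponentIn hxP)
    obtain ⟨w, hwε, hw⟩ :=
      mem_closure_iff.1 (hreg.le hxP) _ Metric.isOpen_ball (Metric.mem_ball_self hε)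
    have hwx : w ∉ connectedComponentIn P x := by
      rw [hx1]
      rintro rfl
      exact notMem_interior_of_connectedComponentIn_eq_singleton hx1 hw
    obtain ⟨z, hz, hzxw, hzx⟩ := exists_mem_frontier_uIcc_ne_of_notMem_connectedComponentIn hcl
      hcomp.bddBelow hcomp.bddAbove hxP (interior_subset hw) hwx
    refine ⟨z, ⟨hεU ?_, hz⟩, hzx⟩
    rw [Metric.mem_ball, Real.dist_eq] at hwε ⊢
    exact (abs_sub_left_of_mem_uIcc hzxw).trans_lt hwε

theorem IsCantorval.isCantorSet_frontier {P : Set ℝ} (hP : IsCantorval P) :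
    IsCantorSet (frontier P) := by
  have hcomp : IsCompact P := hP.2.1
  exact ⟨nonempty_frontier_iff.2 ⟨hP.1, fun h => not_bddAbove_univ (h ▸ hcomp.bddAbove)⟩,
    hcomp.of_isClosed_subset isClosed_frontier hcomp.isClosed.frontier_subset,
    hP.perfect_frontier, interior_frontier hcomp.isClosed⟩

theorem isCantorval_of_perfect_frontier {A : Set ℝ} (hA : Bornology.IsBounded A)
    (hreg : A = closure (interior A)) (hne : (frontier A).Nonempty)
    (hF : Perfect (frontier A)) : IsCantorval A := by
  have hcl : IsClosed A := hreg ▸ isClosed_closure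
  refine ⟨hne.mono hcl.frontier_subset, Metric.isCompact_of_isClosed_isBounded hcl hA, hreg, ?_⟩
  rintro x hx - y hy ε hε
  have hyF : y ∈ frontier A := by
    rcases hy with rfl | rfl
    exacts [csInf_connectedComponentIn_mem_frontier hcl hA.bddBelow hx,
      csSup_connectedComponentIn_mem_frontier hcl hA.bddAbove hx]
  obtain ⟨z, ⟨hzε, hzF⟩, hzy, hzE⟩ := hF.exists_ne_notMem_of_countable hyF
    (Metric.ball_mem_nhds y hε)
    (countable_setOf_mem_frontier_connectedComponentIn_nontrivial hA.bddBelow hA.bddAbove)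
  have hzA := hcl.frontier_subset hzF
  refine ⟨z, hzA, hzy, by rwa [Metric.mem_ball, Real.dist_eq] at hzε, ?_⟩
  exact (not_nontrivial_iff.1 fun h => hzE ⟨hzF, h⟩).eq_singleton_of_mem
    (mem_connectedComponentIn hzA)

/-- A bounded set A is a Cantorval iff it is regularly closed and its
boundary is a Cantor set (nonempty compact perfect nowhere dense). -/
theorem stmt_2 (A : Set ℝ) (hA : Bornology.IsBounded A) :
    IsCantorval A ↔ A = closure (interior A) ∧ IsCantorSet (frontier A) :=
  ⟨fun h => ⟨h.2.2.1, h.isCantorSet_frontier⟩,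
    fun ⟨hreg, hne, _, hF, _⟩ => isCantorval_of_perfect_frontier hA hreg hne hF⟩
end

section
/- Let (W_n) be a descending sequence of multi-interval sets (finite unions of closed bounded nondegenerate intervals), and let ‖W‖ denote the maximal length of a connected component of W. Then ⋂_n W_n contains a nondegenerate interval if and only if lim_{n→∞} ‖W_n‖ > 0. -/
open Set MeasureTheory Pointwise

/-- A multi-interval set: a finite nonempty union of closed bounded nondegenerate
intervals. -/
def IsMultiInterval (W : Set ℝ) : Prop :=
  ∃ s : Finset (ℝ × ℝ), s.Nonempty ∧ (∀ p ∈ s, p.1 < p.2) ∧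
    W = ⋃ p ∈ s, Set.Icc p.1 p.2

/-- The maximal length of a connected component of W. -/
noncomputable def maxCompLen (W : Set ℝ) : ℝ :=
  sSup ((fun x => sSup (connectedComponentIn W x) - sInf (connectedComponentIn W x)) '' W)


namespace Stmt3Aux

noncomputable def len (V : Set ℝ) (x : ℝ) : ℝ :=
  sSup (connectedComponentIn V x) - sInf (connectedComponentIn V x)

variable {V : Set ℝ} {x : ℝ}

theorem isCompact_of_multi (h : ∃ s : Finset (ℝ × ℝ), s.Nonempty ∧ (∀ p ∈ s, p.1 < p.2) ∧
    V = ⋃ p ∈ s, Set.Icc p.1 p.2) : IsCompact V := by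
  obtain ⟨s, -, -, rfl⟩ := h
  exact s.isCompact_biUnion fun p _ => isCompact_Icc

theorem isClosed_cc (hV : IsClosed V) (hx : x ∈ V) :
    IsClosed (connectedComponentIn V x) := by
  have hsub : closure (connectedComponentIn V x) ⊆ connectedComponentIn V x :=
    isPreconnected_connectedComponentIn.closure.subset_connectedComponentIn
      (subset_closure (mem_connectedComponentIn hx))
      ((closure_mono (connectedComponentIn_subset _ _)).trans hV.closure_subset)
  exact isClosed_of_closure_subset hsub

theorem isCompact_cc (hV : IsCompact V) (hx : x ∈ V) :
    IsCompact (connectedComponentIn V x) :=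
  hV.of_isClosed_subset (isClosed_cc hV.isClosed hx) (connectedComponentIn_subset _ _)

theorem Icc_subset_cc (hV : IsCompact V) (hx : x ∈ V) :
    Icc (sInf (connectedComponentIn V x)) (sSup (connectedComponentIn V x)) ⊆
      connectedComponentIn V x := by
  have hc := isCompact_cc hV hx
  have hne : (connectedComponentIn V x).Nonempty := ⟨x, mem_connectedComponentIn hx⟩
  have ha := hc.isClosed.csInf_mem hne hc.bddBelow
  have hb := hc.isClosed.csSup_mem hne hc.bddAbove
  exact isPreconnected_connectedComponentIn.ordConnected.out ha hb

theorem len_congr {V : Set ℝ} {x y : ℝ}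
    (h : connectedComponentIn V x = connectedComponentIn V y) : len V x = len V y := by
  simp only [len, h]

theorem len_nonneg (hV : IsCompact V) (hx : x ∈ V) : 0 ≤ len V x := by
  have hc := isCompact_cc hV hx
  have hne : (connectedComponentIn V x).Nonempty := ⟨x, mem_connectedComponentIn hx⟩
  have := csInf_le_csSup hne hc.bddBelow hc.bddAbove
  simp only [len]; linarith

theorem len_mono {V' : Set ℝ} (hV : IsCompact V) (h' : V' ⊆ V) (hx : x ∈ V') :
    len V' x ≤ len V x := by
  have hmono := connectedComponentIn_mono x h'
  have hne : (connectedComponentIn V' x).Nonempty := ⟨x, mem_connectedComponentIn hx⟩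
  have hc := isCompact_cc hV (h' hx)
  have h1 := csSup_le_csSup hc.bddAbove hne hmono
  have h2 := csInf_le_csInf hc.bddBelow hne hmono
  simp only [len]; linarith

theorem bddAbove_image (hV : IsCompact V) : BddAbove (len V '' V) := by
  rcases V.eq_empty_or_nonempty with rfl | hne
  · simp
  refine ⟨sSup V - sInf V, ?_⟩
  rintro _ ⟨x, hx, rfl⟩
  have hccne : (connectedComponentIn V x).Nonempty := ⟨x, mem_connectedComponentIn hx⟩
  have h1 := csSup_le_csSup hV.bddAbove hccne (connectedComponentIn_subset V x)
  have h2 := csInf_le_csInf hV.bddBelow hccne (connectedComponentIn_subset V x)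
  simp only [len]; linarith

theorem cc_eq_of_mem_Icc {p : ℝ × ℝ} (hp : Icc p.1 p.2 ⊆ V) (hlt : p.1 < p.2)
    (hx : x ∈ Icc p.1 p.2) :
    connectedComponentIn V x = connectedComponentIn V p.1 := by
  have h1 : Icc p.1 p.2 ⊆ connectedComponentIn V x :=
    isPreconnected_Icc.subset_connectedComponentIn hx hp
  exact connectedComponentIn_eq (h1 ⟨le_refl _, hlt.le⟩)

theorem exists_len_eq (h : IsMultiInterval V) :
    ∃ x ∈ V, len V x = maxCompLen V := by
  obtain ⟨s, hsne, hslt, hVeq⟩ := h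
  have him : len V '' V ⊆ (fun p : ℝ × ℝ => len V p.1) '' ↑s := by
    rintro _ ⟨x, hx, rfl⟩
    rw [hVeq] at hx
    simp only [mem_iUnion] at hx
    obtain ⟨p, hps, hxp⟩ := hx
    have hsub : Icc p.1 p.2 ⊆ V := by
      rw [hVeq]; exact subset_biUnion_of_mem (u := fun p : ℝ × ℝ => Icc p.1 p.2) hps
    refine ⟨p, hps, ?_⟩
    simp only [len, cc_eq_of_mem_Icc hsub (hslt p hps) hxp]
  have hfin : (len V '' V).Finite := (s.finite_toSet.image _).subset him
  obtain ⟨p, hps⟩ := hsne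
  have hpV : p.1 ∈ V := by
    rw [hVeq]
    exact mem_biUnion hps ⟨le_refl _, (hslt p hps).le⟩
  have hne : (len V '' V).Nonempty := ⟨_, mem_image_of_mem _ hpV⟩
  have := hne.csSup_mem hfin
  obtain ⟨x, hx, hxeq⟩ := this
  exact ⟨x, hx, hxeq⟩

end Stmt3Aux

open Stmt3Aux in
/-- For a descending sequence of multi-interval sets, the intersection
contains a nondegenerate interval iff the (nonincreasing, hence convergent) sequence
of maximal component lengths has positive limit (= infimum). -/
theorem stmt_3 (W : ℕ → Set ℝ) (hW : ∀ n, IsMultiInterval (W n))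
    (hdesc : ∀ n, W (n + 1) ⊆ W n) :
    (∃ u v : ℝ, u < v ∧ Set.Icc u v ⊆ ⋂ n, W n) ↔ 0 < ⨅ n, maxCompLen (W n) := by
  classical
  have hcomp : ∀ n, IsCompact (W n) := fun n => isCompact_of_multi (hW n)
  have hbdd : BddBelow (Set.range fun n => maxCompLen (W n)) := by
    refine ⟨0, ?_⟩
    rintro _ ⟨n, rfl⟩
    obtain ⟨x, hx, hxe⟩ := exists_len_eq (hW n)
    simp only []
    rw [← hxe]; exact len_nonneg (hcomp n) hx
  constructor
  · rintro ⟨u, v, huv, hsub⟩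
    refine lt_of_lt_of_le (by linarith : (0:ℝ) < v - u) (le_ciInf fun n => ?_)
    have hsubn : Icc u v ⊆ W n := hsub.trans (iInter_subset _ n)
    have huW : u ∈ W n := hsubn ⟨le_refl _, huv.le⟩
    have hcc : Icc u v ⊆ connectedComponentIn (W n) u :=
      isPreconnected_Icc.subset_connectedComponentIn ⟨le_refl _, huv.le⟩ hsubn
    have hc := isCompact_cc (hcomp n) huW
    have h1 : v ≤ sSup (connectedComponentIn (W n) u) :=
      le_csSup hc.bddAbove (hcc ⟨huv.le, le_refl _⟩)
    have h2 : sInf (connectedComponentIn (W n) u) ≤ u :=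
      csInf_le hc.bddBelow (mem_connectedComponentIn huW)
    have hlen : v - u ≤ len (W n) u := by simp only [len]; linarith
    exact hlen.trans (le_csSup (bddAbove_image (hcomp n)) (mem_image_of_mem _ huW))
  · intro hL
    set L := ⨅ n, maxCompLen (W n) with hLdef
    have hLle : ∀ n, L ≤ maxCompLen (W n) := fun n => ciInf_le hbdd n
    set C : ℕ → Set ℝ := fun n => {x ∈ W n | L ≤ len (W n) x} with hCdef
    have hCne : ∀ n, (C n).Nonempty := fun n => by
      obtain ⟨x, hx, hxe⟩ := exists_len_eq (hW n)
      exact ⟨x, hx, hxe ▸ hLle n⟩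
    have hCcomp : ∀ n, IsCompact (C n) := by
      intro n
      obtain ⟨s, hsne, hslt, hVeq⟩ := hW n
      have hp1V : ∀ p ∈ s, p.1 ∈ W n := fun p hps => by
        rw [hVeq]; exact mem_biUnion hps ⟨le_refl _, (hslt p hps).le⟩
      have hCeq : C n = ⋃ p ∈ s.filter (fun p => L ≤ len (W n) p.1),
          connectedComponentIn (W n) p.1 := by
        ext y
        simp only [mem_iUnion, Finset.mem_filter, exists_prop, hCdef, mem_sep_iff]
        constructor
        · rintro ⟨hyW, hylen⟩
          have hy' := hyW; rw [hVeq] at hy'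
          simp only [mem_iUnion, exists_prop] at hy'
          obtain ⟨p, hps, hyp⟩ := hy'
          have hsubI : Icc p.1 p.2 ⊆ W n := by
            rw [hVeq]; exact subset_biUnion_of_mem (u := fun p : ℝ × ℝ => Icc p.1 p.2) hps
          have hcceq := cc_eq_of_mem_Icc hsubI (hslt p hps) hyp
          refine ⟨p, ⟨hps, len_congr hcceq ▸ hylen⟩, ?_⟩
          rw [← hcceq]; exact mem_connectedComponentIn hyW
        · rintro ⟨p, ⟨hps, hplen⟩, hyp⟩
          have hyW : y ∈ W n := connectedComponentIn_subset _ _ hyp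
          have hcceq := connectedComponentIn_eq hyp
          exact ⟨hyW, len_congr hcceq ▸ hplen⟩
      rw [hCeq]
      exact Finset.isCompact_biUnion _ fun p hp =>
        isCompact_cc (hcomp n) (hp1V p (Finset.mem_filter.mp hp).1)
    have hCanti : ∀ n, C (n + 1) ⊆ C n := by
      rintro n x ⟨hxW, hxlen⟩
      exact ⟨hdesc n hxW, hxlen.trans (len_mono (hcomp n) (hdesc n) hxW)⟩
    obtain ⟨x, hx⟩ := IsCompact.nonempty_iInter_of_sequence_nonempty_isCompact_isClosed C
      hCanti hCne (hCcomp 0) (fun n => (hCcomp n).isClosed)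
    rw [mem_iInter] at hx
    have hxW : ∀ n, x ∈ W n := fun n => (hx n).1
    have hxlen : ∀ n, L ≤ len (W n) x := fun n => (hx n).2
    set a : ℕ → ℝ := fun n => sInf (connectedComponentIn (W n) x) with haDef
    set b : ℕ → ℝ := fun n => sSup (connectedComponentIn (W n) x) with hbDef
    have hccne : ∀ n, (connectedComponentIn (W n) x).Nonempty :=
      fun n => ⟨x, mem_connectedComponentIn (hxW n)⟩
    have hcc : ∀ n, IsCompact (connectedComponentIn (W n) x) :=
      fun n => isCompact_cc (hcomp n) (hxW n)
    have amono : Monotone a := monotone_nat_of_le_succ fun n =>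
      csInf_le_csInf (hcc n).bddBelow (hccne (n + 1)) (connectedComponentIn_mono x (hdesc n))
    have banti : Antitone b := antitone_nat_of_succ_le fun n =>
      csSup_le_csSup (hcc n).bddAbove (hccne (n + 1)) (connectedComponentIn_mono x (hdesc n))
    have hab : ∀ n, a n + L ≤ b n := fun n => by
      have := hxlen n; simp only [len] at this; simp only [haDef, hbDef]; linarith
    have haux : ∀ n, a n ≤ x := fun n =>
      csInf_le (hcc n).bddBelow (mem_connectedComponentIn (hxW n))
    have hxub : ∀ n, x ≤ b n := fun n =>
      le_csSup (hcc n).bddAbove (mem_connectedComponentIn (hxW n))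
    have habdd : BddAbove (Set.range a) := ⟨x, by rintro _ ⟨n, rfl⟩; exact haux n⟩
    have hbbdd : BddBelow (Set.range b) := ⟨x, by rintro _ ⟨n, rfl⟩; exact hxub n⟩
    set u := ⨆ n, a n with huDef
    set v := ⨅ n, b n with hvDef
    have huv : u + L ≤ v := by
      refine le_ciInf fun n => ?_
      have hubn : u ≤ b n - L := by
        refine ciSup_le fun m => ?_
        have h1 : a m ≤ a (max m n) := amono (le_max_left m n)
        have h2 : b (max m n) ≤ b n := banti (le_max_right m n)
        have h3 := hab (max m n)
        linarith
      linarith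
    refine ⟨u, v, by linarith, ?_⟩
    rw [subset_iInter_iff]
    intro n y hy
    have h1 : a n ≤ u := le_ciSup habdd n
    have h2 : v ≤ b n := ciInf_le hbbdd n
    exact connectedComponentIn_subset (W n) x
      (Icc_subset_cc (hcomp n) (hxW n) ⟨h1.trans hy.1, hy.2.trans h2⟩)
end

section
/- Let ∑a_n(m,k,q) be a convergent generalized Ferens series satisfying (GF1): q_n ≤ (s_{n+1} − m_{n+1} + 1) q_{n+1} for all n, and (GF2): m_n q_n > ∑_{i>n} (s_i + m_i) q_i for all n. Then the achievement set A(a_n) is a Cantorval. -/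
open Set MeasureTheory Pointwise

/-- Partial sums K_j = k_1 + ... + k_j of the block lengths. -/
def Kf (k : ℕ → ℕ) : ℕ → ℕ
  | 0 => 0
  | j + 1 => Kf k j + k j

/-- s_n = ∑_{i=1}^{k_n - 1} (m_n + i). -/
def sGF (m k : ℕ → ℕ) (i : ℕ) : ℕ := ∑ t ∈ Finset.range (k i - 1), (m i + t + 1)


namespace GFP

structure GFS where
  m : ℕ → ℕ
  k : ℕ → ℕ
  q : ℕ → ℝ
  hm : ∀ n, 2 ≤ m n
  hk : ∀ n, m n < k n
  hq : ∀ n, 0 < q n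
  hsumT : Summable (fun i => ((sGF m k i + m i : ℕ) : ℝ) * q i)
  hGF1 : ∀ n, q n ≤ ((sGF m k (n + 1) : ℝ) - (m (n + 1) : ℝ) + 1) * q (n + 1)
  hGF2 : ∀ n, (∑' i : ℕ, ((sGF m k (n + 1 + i) : ℝ) + (m (n + 1 + i) : ℝ)) * q (n + 1 + i))
      < (m n : ℝ) * q n

namespace GFS

variable (P : GFS)

def s (i : ℕ) : ℕ := sGF P.m P.k i
def T (i : ℕ) : ℕ := P.s i + P.m i

lemma m_pos (i : ℕ) : 0 < P.m i := lt_of_lt_of_le (by norm_num) (P.hm i)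

lemma k_ge (i : ℕ) : 3 ≤ P.k i := lt_of_le_of_lt (P.hm i) (P.hk i)

lemma s_ge (i : ℕ) : P.m i + 1 ≤ P.s i := by
  have h1 : 1 ≤ P.k i - 1 := by have := P.k_ge i; omega
  have h0 : (0 : ℕ) ∈ Finset.range (P.k i - 1) := by
    simp [Finset.mem_range]; omega
  calc P.m i + 1 = P.m i + 0 + 1 := by ring
  _ ≤ ∑ t ∈ Finset.range (P.k i - 1), (P.m i + t + 1) :=
      Finset.single_le_sum (f := fun t => P.m i + t + 1) (fun t _ => by omega) h0
  _ = P.s i := rfl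

lemma m_lt_s (i : ℕ) : P.m i < P.s i := by have := P.s_ge i; omega

lemma s_lt_T (i : ℕ) : P.s i < P.T i := by have := P.m_pos i; simp [T]; omega

lemma one_le_T (i : ℕ) : 1 ≤ P.T i := by have := P.m_pos i; simp [T]; omega

noncomputable def g (i : ℕ) : ℝ := (P.T i : ℝ) * P.q i

lemma g_pos (i : ℕ) : 0 < P.g i := by
  apply mul_pos _ (P.hq i)
  exact_mod_cast P.one_le_T i

lemma summable_g : Summable P.g := P.hsumT

/-- generic weighted series with weights w i ≤ T i -/
noncomputable def wS (w : ℕ → ℕ) (j : ℕ) : ℝ := ∑' i, (w (i + j) : ℝ) * P.q (i + j)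

section wS

variable {w : ℕ → ℕ} (hw : ∀ i, w i ≤ P.T i)
include hw

lemma summable_w : Summable (fun i => (w i : ℝ) * P.q i) := by
  apply Summable.of_nonneg_of_le (fun i => mul_nonneg (Nat.cast_nonneg _) (P.hq i).le) _ P.summable_g
  intro i
  exact mul_le_mul_of_nonneg_right (by exact_mod_cast hw i) (P.hq i).le

lemma summable_w_shift (j : ℕ) : Summable (fun i => (w (i + j) : ℝ) * P.q (i + j)) :=
  ((summable_nat_add_iff j).2 (P.summable_w hw))

lemma hasSum_wS (j : ℕ) : HasSum (fun i => (w (i + j) : ℝ) * P.q (i + j)) (P.wS w j) :=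
  (P.summable_w_shift hw j).hasSum

/-- indicator form -/
lemma hasSum_wS' (j : ℕ) :
    HasSum (fun i => if j ≤ i then (w i : ℝ) * P.q i else 0) (P.wS w j) := by
  have hinj : Function.Injective (fun i : ℕ => i + j) := add_left_injective j
  have hz : ∀ x ∉ Set.range (fun i : ℕ => i + j),
      (fun i => if j ≤ i then (w i : ℝ) * P.q i else 0) x = 0 := by
    intro x hx
    simp only [Set.mem_range, not_exists] at hx
    have : x < j := by by_contra h; exact hx (x - j) (by omega)
    simp [Nat.not_le.2 this]
  have hiff := hinj.hasSum_iff (a := P.wS w j) hz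
  apply hiff.1
  have heq : (fun i : ℕ => if j ≤ i then (w i : ℝ) * P.q i else 0) ∘ (fun i : ℕ => i + j)
      = fun i => (w (i + j) : ℝ) * P.q (i + j) := by
    funext i; simp [Nat.le_add_left]
  rw [heq]
  exact P.hasSum_wS hw j

lemma wS_nonneg (j : ℕ) : 0 ≤ P.wS w j :=
  hasSum_le (fun i => mul_nonneg (Nat.cast_nonneg _) (P.hq _).le) hasSum_zero (P.hasSum_wS hw j)

lemma wS_succ (j : ℕ) : P.wS w j = (w j : ℝ) * P.q j + P.wS w (j + 1) := by
  have h := Summable.tsum_eq_zero_add (f := fun i => (w (i + j) : ℝ) * P.q (i + j))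
    (P.summable_w_shift hw j)
  simp only [Nat.zero_add] at h
  have h2 : ∑' (i : ℕ), (w (i + 1 + j) : ℝ) * P.q (i + 1 + j) = P.wS w (j + 1) := by
    unfold wS
    apply tsum_congr
    intro i
    have e : i + 1 + j = i + (j + 1) := by omega
    rw [e]
  have h3 : P.wS w j = (w j : ℝ) * P.q j + ∑' (i : ℕ), (w (i + 1 + j) : ℝ) * P.q (i + 1 + j) := h
  rw [h3, h2]

omit hw in
lemma wS_tendsto : Filter.Tendsto (P.wS w) Filter.atTop (nhds 0) := by
  have := tendsto_sum_nat_add (f := fun i => (w i : ℝ) * P.q i)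
  exact this

lemma wS_le_wS {w' : ℕ → ℕ} (hw' : ∀ i, w' i ≤ P.T i) (hle : ∀ i, w i ≤ w' i) (j : ℕ) :
    P.wS w j ≤ P.wS w' j := by
  apply hasSum_le _ (P.hasSum_wS hw j) (P.hasSum_wS hw' j)
  intro i
  exact mul_le_mul_of_nonneg_right (by exact_mod_cast hle (i + j)) (P.hq _).le

end wS

noncomputable def r : ℕ → ℝ := P.wS P.T
noncomputable def al : ℕ → ℝ := P.wS P.m
noncomputable def be : ℕ → ℝ := P.wS P.s

lemma m_le_T (i : ℕ) : P.m i ≤ P.T i := Nat.le_add_left _ _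
lemma s_le_T (i : ℕ) : P.s i ≤ P.T i := Nat.le_add_right _ _
lemma T_le_T (i : ℕ) : P.T i ≤ P.T i := le_rfl

lemma r_succ (j : ℕ) : P.r j = P.g j + P.r (j + 1) := P.wS_succ P.T_le_T j
lemma r_nonneg (j : ℕ) : 0 ≤ P.r j := P.wS_nonneg P.T_le_T j
lemma r_pos (j : ℕ) : 0 < P.r j := by
  rw [P.r_succ j]
  have := P.g_pos j; have := P.r_nonneg (j+1); linarith
lemma r_tendsto : Filter.Tendsto P.r Filter.atTop (nhds 0) := P.wS_tendsto (w := P.T)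
lemma hasSum_r (j : ℕ) :
    HasSum (fun i => if j ≤ i then (P.T i : ℝ) * P.q i else 0) (P.r j) := P.hasSum_wS' P.T_le_T j

lemma al_nonneg (j : ℕ) : 0 ≤ P.al j := P.wS_nonneg P.m_le_T j
lemma be_nonneg (j : ℕ) : 0 ≤ P.be j := P.wS_nonneg P.s_le_T j
lemma al_le_be (j : ℕ) : P.al j ≤ P.be j := P.wS_le_wS P.m_le_T P.s_le_T (fun i => (P.m_lt_s i).le) j
lemma be_le_r (j : ℕ) : P.be j ≤ P.r j := P.wS_le_wS P.s_le_T P.T_le_T P.s_le_T j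
lemma al_tendsto : Filter.Tendsto P.al Filter.atTop (nhds 0) := P.wS_tendsto (w := P.m)
lemma be_tendsto : Filter.Tendsto P.be Filter.atTop (nhds 0) := P.wS_tendsto (w := P.s)

lemma al_add_be (j : ℕ) : P.al j + P.be j = P.r j := by
  have h1 := P.hasSum_wS P.m_le_T j
  have h2 := P.hasSum_wS P.s_le_T j
  have h3 := h1.add h2
  have : (fun i => (P.m (i+j) : ℝ) * P.q (i+j) + (P.s (i+j) : ℝ) * P.q (i+j))
      = fun i => (P.T (i+j) : ℝ) * P.q (i+j) := by
    funext i; simp only [T]; push_cast; ring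
  rw [this] at h3
  exact h3.unique (P.hasSum_wS P.T_le_T j)

lemma hGF2' (n : ℕ) : P.r (n + 1) < (P.m n : ℝ) * P.q n := by
  have h := P.hGF2 n
  have heq : (∑' i : ℕ, ((sGF P.m P.k (n + 1 + i) : ℝ) + (P.m (n + 1 + i) : ℝ)) * P.q (n + 1 + i))
      = P.r (n + 1) := by
    unfold r wS
    apply tsum_congr
    intro i
    have : n + 1 + i = i + (n + 1) := by omega
    rw [this]
    simp only [T, s]; push_cast; ring
  rwa [heq] at h

lemma q_pos (i : ℕ) : 0 < P.q i := P.hq i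

lemma q_le_g (i : ℕ) : P.q i ≤ P.g i := by
  have h := P.one_le_T i
  calc P.q i = 1 * P.q i := by ring
  _ ≤ (P.T i : ℝ) * P.q i := mul_le_mul_of_nonneg_right (by exact_mod_cast h) (P.hq i).le

lemma q_tendsto : Filter.Tendsto P.q Filter.atTop (nhds 0) := by
  apply squeeze_zero (fun i => (P.hq i).le) P.q_le_g
  exact P.summable_g.tendsto_atTop_zero

/-- key consequence of GF1: the interval length at level j+1 dominates q j -/
lemma q_le_len (j : ℕ) : P.q j ≤ P.be (j + 1) - P.al (j + 1) := by
  -- partial-sum telescoping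
  set d : ℕ → ℝ := fun i => ((P.s i : ℝ) - P.m i) * P.q i with hd
  have hstep : ∀ n, P.q n ≤ d (n+1) + P.q (n+1) := by
    intro n
    have := P.hGF1 n
    simp only [hd]
    have hs : (sGF P.m P.k (n+1) : ℝ) = (P.s (n+1) : ℝ) := rfl
    nlinarith [P.hq (n+1)]
  have key : ∀ N, P.q j ≤ (∑ i ∈ Finset.range (N + 1), d (i + (j + 1))) + P.q (j + 1 + N) := by
    intro N
    induction N with
    | zero => simpa using hstep j
    | succ N ih =>
      have h2 := hstep (j + 1 + N)
      rw [Finset.sum_range_succ]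
      have e1 : N + 1 + (j + 1) = j + 1 + N + 1 := by omega
      have e2 : j + 1 + (N + 1) = j + 1 + N + 1 := by omega
      rw [e1, e2]
      linarith
  -- take limits
  have hsum_d : HasSum (fun i => d (i + (j+1))) (P.be (j+1) - P.al (j+1)) := by
    have h1 := P.hasSum_wS P.s_le_T (j+1)
    have h2 := P.hasSum_wS P.m_le_T (j+1)
    have h3 := h1.sub h2
    have : (fun i => (P.s (i+(j+1)) : ℝ) * P.q (i+(j+1)) - (P.m (i+(j+1)) : ℝ) * P.q (i+(j+1)))
        = fun i => d (i + (j+1)) := by funext i; simp [hd]; ring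
    rwa [this] at h3
  have hlim1 : Filter.Tendsto (fun N => ∑ i ∈ Finset.range (N+1), d (i + (j+1)))
      Filter.atTop (nhds (P.be (j+1) - P.al (j+1))) :=
    (hsum_d.tendsto_sum_nat).comp (Filter.tendsto_add_atTop_nat 1)
  have hlim2 : Filter.Tendsto (fun N => P.q (j + 1 + N)) Filter.atTop (nhds 0) := by
    have h0 : Filter.Tendsto (fun N : ℕ => N + (j + 1)) Filter.atTop Filter.atTop :=
      Filter.tendsto_add_atTop_nat (j + 1)
    have := P.q_tendsto.comp h0
    apply this.congr
    intro N; simp [Function.comp]; congr 1; omega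
  have hco : Filter.Tendsto
      (fun N => (∑ i ∈ Finset.range (N + 1), d (i + (j + 1))) + P.q (j + 1 + N))
      Filter.atTop (nhds ((P.be (j + 1) - P.al (j + 1)) + 0)) := hlim1.add hlim2
  rw [add_zero] at hco
  exact le_of_tendsto_of_tendsto tendsto_const_nhds hco (Filter.Eventually.of_forall key)

/-! ### coding sets -/

def SS (i : ℕ) : Set ℕ := insert 0 (insert (P.T i) (Set.Icc (P.m i) (P.s i)))

lemma zero_mem_SS (i : ℕ) : 0 ∈ P.SS i := by simp [SS]

lemma T_mem_SS (i : ℕ) : P.T i ∈ P.SS i := by simp [SS]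

lemma mid_mem_SS {i t : ℕ} (h1 : P.m i ≤ t) (h2 : t ≤ P.s i) : t ∈ P.SS i := by
  simp [SS, Set.mem_Icc]; tauto

lemma SS_cases {i c : ℕ} (h : c ∈ P.SS i) :
    c = 0 ∨ (P.m i ≤ c ∧ c ≤ P.s i) ∨ c = P.T i := by
  simp [SS, Set.mem_Icc] at h; tauto

lemma SS_le_T {i c : ℕ} (h : c ∈ P.SS i) : c ≤ P.T i := by
  rcases P.SS_cases h with h | h | h
  · omega
  · have := P.s_le_T i; omega
  · omega

lemma SS_le_s {i c : ℕ} (h : c ∈ P.SS i) (hne : c ≠ P.T i) : c ≤ P.s i := by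
  rcases P.SS_cases h with h | h | h
  · omega
  · omega
  · exact absurd h hne

lemma SS_compl {i c : ℕ} (h : c ∈ P.SS i) : P.T i - c ∈ P.SS i := by
  rcases P.SS_cases h with h | h | h
  · subst h; simpa using P.T_mem_SS i
  · apply P.mid_mem_SS
    · simp only [T]; omega
    · simp only [T]; omega
  · subst h; simpa using P.zero_mem_SS i

def Valid (c : ℕ → ℕ) : Prop := ∀ i, c i ∈ P.SS i

lemma valid_summable {c : ℕ → ℕ} (hc : P.Valid c) :
    Summable (fun i => (c i : ℝ) * P.q i) :=
  P.summable_w (fun i => P.SS_le_T (hc i))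

/-- the tail coding set: all sums `∑ c i * q i` where `c` is a valid coding
vanishing below `j` -/
def AA (j : ℕ) : Set ℝ :=
  {x | ∃ c : ℕ → ℕ, P.Valid c ∧ (∀ i, i < j → c i = 0) ∧
    HasSum (fun i => (c i : ℝ) * P.q i) x}

lemma zero_mem_AA (j : ℕ) : (0 : ℝ) ∈ P.AA j := by
  refine ⟨fun _ => 0, fun i => P.zero_mem_SS i, fun i _ => rfl, ?_⟩
  have : (fun i : ℕ => ((0 : ℕ) : ℝ) * P.q i) = fun _ => (0 : ℝ) := by funext i; simp
  rw [this]; exact hasSum_zero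

lemma r_mem_AA (j : ℕ) : P.r j ∈ P.AA j := by
  refine ⟨fun i => if j ≤ i then P.T i else 0, ?_, ?_, ?_⟩
  · intro i
    by_cases h : j ≤ i
    · simp [h]; exact P.T_mem_SS i
    · simp [h]; exact P.zero_mem_SS i
  · intro i hi; simp [Nat.not_le.2 hi]
  · have : (fun i => ((if j ≤ i then P.T i else 0 : ℕ) : ℝ) * P.q i)
        = fun i => if j ≤ i then (P.T i : ℝ) * P.q i else 0 := by
      funext i; by_cases h : j ≤ i <;> simp [h]
    rw [this]; exact P.hasSum_r j

lemma AA_nonneg {j : ℕ} {x : ℝ} (hx : x ∈ P.AA j) : 0 ≤ x := by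
  obtain ⟨c, hc, -, hsum⟩ := hx
  exact hasSum_le (fun i => mul_nonneg (Nat.cast_nonneg _) (P.hq i).le) hasSum_zero hsum

lemma AA_le_r {j : ℕ} {x : ℝ} (hx : x ∈ P.AA j) : x ≤ P.r j := by
  obtain ⟨c, hc, hz, hsum⟩ := hx
  apply hasSum_le _ hsum (P.hasSum_r j)
  intro i
  by_cases h : j ≤ i
  · simp only [if_pos h]
    exact mul_le_mul_of_nonneg_right (by exact_mod_cast P.SS_le_T (hc i)) (P.hq i).le
  · simp only [if_neg h, hz i (Nat.not_le.1 h)]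
    simp

/-- branch decomposition at level j -/
lemma mem_AA_iff (j : ℕ) {x : ℝ} :
    x ∈ P.AA j ↔ ∃ t ∈ P.SS j, ∃ y ∈ P.AA (j + 1), x = (t : ℝ) * P.q j + y := by
  constructor
  · rintro ⟨c, hc, hz, hsum⟩
    classical
    refine ⟨c j, hc j, x - (c j : ℝ) * P.q j, ?_, by ring⟩
    refine ⟨Function.update c j 0, ?_, ?_, ?_⟩
    · intro i
      by_cases h : i = j
      · subst h; simp [Function.update_self]; exact P.zero_mem_SS i
      · simp [Function.update_of_ne h]; exact hc i
    · intro i hi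
      by_cases h : i = j
      · subst h; simp
      · rw [Function.update_of_ne h]; exact hz i (by omega)
    · have h := hsum.update j (0 : ℝ)
      have heq : Function.update (fun i => (c i : ℝ) * P.q i) j 0
          = fun i => ((Function.update c j 0 i : ℕ) : ℝ) * P.q i := by
        funext i
        by_cases h2 : i = j
        · subst h2; simp
        · simp [Function.update_of_ne h2]
      rw [heq] at h
      convert h using 1
      · rfl
      · ring
  · rintro ⟨t, ht, y, ⟨c, hc, hz, hsum⟩, rfl⟩
    classical
    refine ⟨Function.update c j t, ?_, ?_, ?_⟩
    · intro i
      by_cases h : i = j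
      · subst h; simpa using ht
      · simp [Function.update_of_ne h]; exact hc i
    · intro i hi
      rw [Function.update_of_ne (by omega)]
      exact hz i (by omega)
    · have h := hsum.update j ((t : ℝ) * P.q j)
      have hcj : c j = 0 := hz j (by omega)
      have heq : Function.update (fun i => (c i : ℝ) * P.q i) j ((t : ℝ) * P.q j)
          = fun i => ((Function.update c j t i : ℕ) : ℝ) * P.q i := by
        funext i
        by_cases h2 : i = j
        · subst h2; simp
        · simp [Function.update_of_ne h2]
      rw [heq] at h
      convert h using 1
      · rfl
      · rw [hcj]; push_cast; ring

lemma branch_mem {j t : ℕ} (ht : t ∈ P.SS j) {y : ℝ} (hy : y ∈ P.AA (j + 1)) :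
    (t : ℝ) * P.q j + y ∈ P.AA j :=
  (P.mem_AA_iff j).2 ⟨t, ht, y, hy, rfl⟩

lemma AA_succ_subset (j : ℕ) : P.AA (j + 1) ⊆ P.AA j := by
  intro y hy
  have := P.branch_mem (P.zero_mem_SS j) hy
  simpa using this

/-- the fundamental gap -/
lemma gap_lemma {j : ℕ} {x : ℝ} (hx : x ∈ P.AA j) :
    x ≤ P.r (j + 1) ∨ (P.m j : ℝ) * P.q j ≤ x := by
  obtain ⟨t, ht, y, hy, rfl⟩ := (P.mem_AA_iff j).1 hx
  rcases P.SS_cases ht with h | h | h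
  · subst h; left; simpa using P.AA_le_r hy
  · right
    have h1 : (P.m j : ℝ) ≤ (t : ℝ) := by exact_mod_cast h.1
    have := P.AA_nonneg hy
    nlinarith [P.hq j]
  · subst h; right
    have h1 : (P.m j : ℝ) ≤ (P.T j : ℝ) := by exact_mod_cast P.m_le_T j
    have := P.AA_nonneg hy
    nlinarith [P.hq j]

/-- the top window: any element close enough to the top comes from the top branch -/
lemma top_window {j : ℕ} {x : ℝ} (hx : x ∈ P.AA j)
    (h : (P.s j : ℝ) * P.q j + P.r (j + 1) < x) :
    ∃ y ∈ P.AA (j + 1), x = (P.T j : ℝ) * P.q j + y := by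
  obtain ⟨t, ht, y, hy, rfl⟩ := (P.mem_AA_iff j).1 hx
  by_cases hT : t = P.T j
  · exact ⟨y, hy, by rw [hT]⟩
  · exfalso
    have hts : t ≤ P.s j := P.SS_le_s ht hT
    have h1 : (t : ℝ) ≤ (P.s j : ℝ) := by exact_mod_cast hts
    have h2 := P.AA_le_r hy
    nlinarith [P.hq j]

/-- symmetry of the tail sets -/
lemma compl_mem_AA {j : ℕ} {x : ℝ} (hx : x ∈ P.AA j) : P.r j - x ∈ P.AA j := by
  obtain ⟨c, hc, hz, hsum⟩ := hx
  refine ⟨fun i => if j ≤ i then P.T i - c i else 0, ?_, ?_, ?_⟩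
  · intro i
    by_cases h : j ≤ i
    · simp only [if_pos h]; exact P.SS_compl (hc i)
    · simp only [if_neg h]; exact P.zero_mem_SS i
  · intro i hi; simp [Nat.not_le.2 hi]
  · have h := (P.hasSum_r j).sub hsum
    have heq : (fun i => (if j ≤ i then (P.T i : ℝ) * P.q i else 0) - (c i : ℝ) * P.q i)
        = fun i => ((if j ≤ i then P.T i - c i else 0 : ℕ) : ℝ) * P.q i := by
      funext i
      by_cases h2 : j ≤ i
      · simp only [if_pos h2]
        rw [Nat.cast_sub (P.SS_le_T (hc i))]
        ring
      · simp only [if_neg h2, hz i (Nat.not_le.1 h2)]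
        simp
    rwa [heq] at h

/-- no interval inside AA j touches its top point r j -/
lemma noTopTouch (j : ℕ) {γ : ℝ} (hγ : 0 < γ) :
    ¬ (Set.Icc (P.r j - γ) (P.r j) ⊆ P.AA j) := by
  intro hsub
  -- propagate the hypothesis to all deeper levels
  have H : ∀ n, ∀ y : ℝ, 0 ≤ y → P.r (j + n) - γ ≤ y → y ≤ P.r (j + n) → y ∈ P.AA (j + n) := by
    intro n
    induction n with
    | zero =>
      intro y _ h1 h2
      exact hsub ⟨by simpa using h1, by simpa using h2⟩
    | succ n ih =>
      intro y hy0 h1 h2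
      set l := j + n with hl
      have hjn : j + (n + 1) = l + 1 := by omega
      rw [hjn] at h1 h2 ⊢
      have hx : P.g l + y ∈ P.AA l := by
        apply ih
        · have := P.g_pos l; linarith
        · rw [P.r_succ l]; linarith
        · rw [P.r_succ l]; linarith
      have hgt : (P.s l : ℝ) * P.q l + P.r (l + 1) < P.g l + y := by
        have hgap := P.hGF2' l
        have : P.g l = (P.T l : ℝ) * P.q l := rfl
        rw [this]
        have hTl : (P.T l : ℝ) = (P.s l : ℝ) + (P.m l : ℝ) := by
          simp only [T]; push_cast; ring
        rw [hTl]
        nlinarith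
      obtain ⟨y', hy', heq⟩ := P.top_window hx hgt
      have : y' = y := by
        have : P.g l = (P.T l : ℝ) * P.q l := rfl
        rw [this] at heq; linarith
      rwa [← this]
  -- now find a deep level with r < γ and hit the gap
  have hev : ∃ N, ∀ l ≥ N, P.r l < γ := by
    have := P.r_tendsto.eventually (gt_mem_nhds hγ)
    exact Filter.eventually_atTop.1 this
  obtain ⟨N, hN⟩ := hev
  set l := j + N with hl
  have hrl : P.r l < γ := hN l (by omega)
  set ξ := (P.r (l + 1) + (P.m l : ℝ) * P.q l) / 2 with hξ
  have hgap := P.hGF2' l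
  have h0 : 0 ≤ ξ := by
    have := P.r_nonneg (l + 1)
    have := P.m_pos l
    have := P.hq l
    positivity
  have hξr : ξ ≤ P.r l := by
    have h1 : ξ < (P.m l : ℝ) * P.q l := by rw [hξ]; linarith
    have h2 : (P.m l : ℝ) * P.q l ≤ P.g l := by
      have : (P.m l : ℕ) ≤ P.T l := P.m_le_T l
      exact mul_le_mul_of_nonneg_right (by exact_mod_cast this) (P.hq l).le
    have h3 : P.g l ≤ P.r l := by rw [P.r_succ l]; have := P.r_nonneg (l + 1); linarith
    linarith
  have hmem : ξ ∈ P.AA l := H N ξ h0 (by linarith) hξr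
  rcases P.gap_lemma hmem with h | h
  · rw [hξ] at h; linarith
  · rw [hξ] at h; linarith

/-! ### finite prefix sets and the decomposition of AA 0 -/

noncomputable def SSF (i : ℕ) : Finset ℕ :=
  insert 0 (insert (P.T i) (Finset.Icc (P.m i) (P.s i)))

lemma mem_SSF_iff {i c : ℕ} : c ∈ P.SSF i ↔ c ∈ P.SS i := by
  simp [SSF, SS, Finset.mem_Icc, Set.mem_Icc]

noncomputable def FpF : ℕ → Finset ℝ
  | 0 => {0}
  | j + 1 => Finset.image₂ (fun (f : ℝ) (t : ℕ) => f + (t : ℝ) * P.q j) (FpF j) (P.SSF j)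

lemma FpF_split (j : ℕ) {x : ℝ} (hx : x ∈ P.AA 0) :
    ∃ f ∈ P.FpF j, x - f ∈ P.AA j := by
  induction j with
  | zero => exact ⟨0, by simp [FpF], by simpa using hx⟩
  | succ j ih =>
    obtain ⟨f, hf, hy⟩ := ih
    obtain ⟨t, ht, y', hy', heq⟩ := (P.mem_AA_iff j).1 hy
    refine ⟨f + (t : ℝ) * P.q j, ?_, ?_⟩
    · exact Finset.mem_image₂_of_mem hf (P.mem_SSF_iff.2 ht)
    · have : x - (f + (t : ℝ) * P.q j) = y' := by linarith
      rwa [this]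

lemma FpF_compose {j : ℕ} {f y : ℝ} (hf : f ∈ P.FpF j) (hy : y ∈ P.AA j) :
    f + y ∈ P.AA 0 := by
  induction j generalizing f y with
  | zero =>
    simp [FpF] at hf
    subst hf; simpa using hy
  | succ j ih =>
    simp only [FpF] at hf
    rw [Finset.mem_image₂] at hf
    obtain ⟨f', hf', t, ht, rfl⟩ := hf
    have h1 : (t : ℝ) * P.q j + y ∈ P.AA j :=
      P.branch_mem (j := j) (t := t) ((P.mem_SSF_iff (i := j) (c := t)).1 ht) hy
    have := ih hf' h1
    convert this using 1; ring

/-! ### the descent argument: no interval in AA 0 touches a gap from below -/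

/-- covering predicate -/
def Cov (X : Finset ℝ) (j : ℕ) (M γ : ℝ) : Prop :=
  ∀ z ∈ Set.Icc (M - γ) M, ∃ x ∈ X, z - x ∈ P.AA j

lemma descent_step {X : Finset ℝ} {j : ℕ} {M γ : ℝ}
    (htops : ∀ x ∈ X, x + P.r j ≤ M)
    (hcov : P.Cov X j M γ) :
    P.Cov (X.image (fun x => x + P.g j)) (j + 1) M
      (min γ ((P.m j : ℝ) * P.q j / 2)) := by
  intro z hz
  have hγ' : min γ ((P.m j : ℝ) * P.q j / 2) ≤ γ := min_le_left _ _
  obtain ⟨x, hx, hw⟩ := hcov z ⟨by linarith [hz.1], hz.2⟩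
  have hwlow : P.r j - min γ ((P.m j : ℝ) * P.q j / 2) ≤ z - x := by
    have h1 := htops x hx
    have h2 := hz.1
    linarith
  have hmq : 0 < (P.m j : ℝ) * P.q j := by
    have := P.m_pos j; have := P.hq j
    positivity
  have hgt : (P.s j : ℝ) * P.q j + P.r (j + 1) < z - x := by
    have h1 : P.r j = (P.T j : ℝ) * P.q j + P.r (j + 1) := P.r_succ j
    have hT : (P.T j : ℝ) = (P.s j : ℝ) + (P.m j : ℝ) := by
      simp only [T]; push_cast; ring
    have h1' : P.r j = (P.s j : ℝ) * P.q j + (P.m j : ℝ) * P.q j + P.r (j + 1) := by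
      rw [h1, hT]; ring
    have h2 : min γ ((P.m j : ℝ) * P.q j / 2) ≤ (P.m j : ℝ) * P.q j / 2 := min_le_right _ _
    linarith
  obtain ⟨y, hy, heq⟩ := P.top_window hw hgt
  refine ⟨x + P.g j, Finset.mem_image_of_mem _ hx, ?_⟩
  have : z - (x + P.g j) = y := by
    have : P.g j = (P.T j : ℝ) * P.q j := rfl
    rw [this]; linarith
  rwa [this]

/-- the iterated descent -/
noncomputable def gam (γ0 : ℝ) (j0 : ℕ) : ℕ → ℝ
  | 0 => γ0
  | n + 1 => min (gam γ0 j0 n) ((P.m (j0 + n) : ℝ) * P.q (j0 + n) / 2)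

lemma gam_pos {γ0 : ℝ} (h : 0 < γ0) (j0 n : ℕ) : 0 < P.gam γ0 j0 n := by
  induction n with
  | zero => exact h
  | succ n ih =>
    apply lt_min ih
    have := P.m_pos (j0 + n); have := P.hq (j0 + n)
    positivity

lemma descent_iter {X : Finset ℝ} {j0 : ℕ} {M γ0 : ℝ}
    (htops : ∀ x ∈ X, x + P.r j0 ≤ M)
    (hcov : P.Cov X j0 M γ0) (n : ℕ) :
    P.Cov (X.image (fun x => x + (P.r j0 - P.r (j0 + n)))) (j0 + n) M (P.gam γ0 j0 n) := by
  induction n with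
  | zero =>
    simp only [Nat.add_zero, sub_self]
    have hXX : X.image (fun x => x + (0:ℝ)) = X := by
      apply Finset.image_congr ?_ |>.trans Finset.image_id
      intro x _; simp
    rw [hXX]
    exact hcov
  | succ n ih =>
    have htops' : ∀ x ∈ X.image (fun x => x + (P.r j0 - P.r (j0 + n))),
        x + P.r (j0 + n) ≤ M := by
      intro x hx
      rw [Finset.mem_image] at hx
      obtain ⟨x', hx', rfl⟩ := hx
      have := htops x' hx'
      linarith
    have hstep := P.descent_step htops' ih
    have hjn : j0 + (n + 1) = (j0 + n) + 1 := by omega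
    rw [hjn]
    have hXX : (X.image (fun x => x + (P.r j0 - P.r (j0 + n)))).image
          (fun x => x + P.g (j0 + n))
        = X.image (fun x => x + (P.r j0 - P.r (j0 + (n + 1)))) := by
      rw [Finset.image_image]
      apply Finset.image_congr
      intro x _
      simp only [Function.comp]
      have hr : P.r (j0 + n) = P.g (j0 + n) + P.r (j0 + n + 1) := P.r_succ (j0 + n)
      have : j0 + (n + 1) = j0 + n + 1 := by omega
      rw [this]
      linarith
    rw [hXX] at hstep
    exact hstep

/-- MAIN LEMMA (right version): if an interval inside AA 0 touches `v` from below,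
then AA 0 has points just above v. -/
lemma mainR {v δ ε : ℝ} (hδ : 0 < δ) (hε : 0 < ε)
    (hint : Set.Icc (v - δ) v ⊆ P.AA 0)
    (hgap : ∀ z ∈ P.AA 0, z ∉ Set.Ioo v (v + ε)) : False := by
  classical
  -- choose a deep level
  obtain ⟨j0, hj0⟩ : ∃ j0, P.r j0 < ε := by
    have := P.r_tendsto.eventually (gt_mem_nhds hε)
    obtain ⟨N, hN⟩ := Filter.eventually_atTop.1 this
    exact ⟨N, hN N le_rfl⟩
  set X : Finset ℝ := (P.FpF j0).filter (fun f => f + P.r j0 ≤ v) with hX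
  have htops : ∀ x ∈ X, x + P.r j0 ≤ v := by
    intro x hx; exact (Finset.mem_filter.1 hx).2
  have hcov : P.Cov X j0 v δ := by
    intro z hz
    obtain ⟨f, hf, hzf⟩ := P.FpF_split j0 (hint hz)
    refine ⟨f, ?_, hzf⟩
    rw [hX, Finset.mem_filter]
    refine ⟨hf, ?_⟩
    by_contra hc
    push_neg at hc
    have h1 : f + P.r j0 ∈ P.AA 0 := P.FpF_compose hf (P.r_mem_AA j0)
    have h2 : f ≤ z := by have := P.AA_nonneg hzf; linarith
    have h3 : f + P.r j0 < v + ε := by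
      have := hz.2; linarith
    exact hgap _ h1 ⟨hc, h3⟩
  -- the maximal element of X
  have hvX : v - P.r j0 ∈ X := by
    obtain ⟨x, hx, hw⟩ := hcov v ⟨by linarith, le_rfl⟩
    have h1 : v - x ≤ P.r j0 := P.AA_le_r hw
    have h2 : x + P.r j0 ≤ v := htops x hx
    have : x = v - P.r j0 := by linarith
    rwa [this] at hx
  set x₀ : ℝ := v - P.r j0 with hx₀
  -- separation distance
  set Y : Finset ℝ := X.erase x₀ with hY
  set d : ℝ := if hne : Y.Nonempty then x₀ - Y.max' hne else 1 with hd
  have hdpos : 0 < d := by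
    rw [hd]
    split_ifs with hne
    · have hmax : Y.max' hne ∈ Y := Y.max'_mem hne
      have h1 : Y.max' hne ∈ X := Finset.mem_of_mem_erase hmax
      have h2 : Y.max' hne ≠ x₀ := Finset.ne_of_mem_erase hmax
      have h3 := htops _ h1
      have : Y.max' hne ≤ x₀ := by rw [hx₀]; linarith
      rcases this.lt_or_eq with h | h
      · linarith
      · exact absurd h h2
    · norm_num
  have hdmem : ∀ x ∈ X, x ≠ x₀ → x ≤ x₀ - d := by
    intro x hx hxne
    have hxY : x ∈ Y := Finset.mem_erase.2 ⟨hxne, hx⟩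
    have hne : Y.Nonempty := ⟨x, hxY⟩
    rw [hd, dif_pos hne]
    have := Finset.le_max' Y x hxY
    linarith
  -- find a level where the window is smaller than d
  obtain ⟨n, hn⟩ : ∃ n, P.gam δ j0 (n + 1) < d := by
    have hg : Filter.Tendsto (fun n => P.g (j0 + n)) Filter.atTop (nhds 0) := by
      have h0 : Filter.Tendsto (fun n : ℕ => n + j0) Filter.atTop Filter.atTop :=
        Filter.tendsto_add_atTop_nat j0
      have := (P.summable_g.tendsto_atTop_zero).comp h0
      apply this.congr
      intro n; simp [Function.comp]; congr 1; omega
    have := hg.eventually (gt_mem_nhds (show (0:ℝ) < d from hdpos))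
    obtain ⟨N, hN⟩ := Filter.eventually_atTop.1 this
    refine ⟨N, ?_⟩
    have h1 : P.gam δ j0 (N + 1) ≤ (P.m (j0 + N) : ℝ) * P.q (j0 + N) / 2 := by
      simp [gam]
    have h2 : (P.m (j0 + N) : ℝ) * P.q (j0 + N) ≤ P.g (j0 + N) := by
      apply mul_le_mul_of_nonneg_right _ (P.hq _).le
      exact_mod_cast P.m_le_T (j0 + N)
    have h3 := hN N le_rfl
    linarith
  set n1 := n + 1 with hn1
  have hiter := P.descent_iter htops hcov n1
  set γ' := P.gam δ j0 n1 with hγ'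
  have hγ'pos : 0 < γ' := P.gam_pos hδ j0 n1
  -- only the top translate survives
  have hfinal : Set.Icc (P.r (j0 + n1) - γ') (P.r (j0 + n1)) ⊆ P.AA (j0 + n1) := by
    intro y hy
    set z := y + (v - P.r (j0 + n1)) with hz
    have hzmem : z ∈ Set.Icc (v - γ') v := by
      constructor
      · rw [hz]; have := hy.1; linarith
      · rw [hz]; have := hy.2; linarith
    obtain ⟨x, hx, hw⟩ := hiter z hzmem
    rw [Finset.mem_image] at hx
    obtain ⟨x', hx', rfl⟩ := hx
    have hwr : z - (x' + (P.r j0 - P.r (j0 + n1))) ≤ P.r (j0 + n1) := P.AA_le_r hw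
    by_cases hxe : x' = x₀
    · subst hxe
      have heq : z - (x₀ + (P.r j0 - P.r (j0 + n1))) = y := by
        rw [hz, hx₀]; ring
      rwa [heq] at hw
    · exfalso
      have h1 : x' ≤ x₀ - d := hdmem x' hx' hxe
      have h2 : z ≤ x' + P.r j0 := by linarith
      have h3 : z ≥ v - γ' := hzmem.1
      have h4 : x' + P.r j0 ≤ x₀ - d + P.r j0 := by linarith
      have h5 : x₀ + P.r j0 = v := by rw [hx₀]; ring
      linarith
  exact P.noTopTouch (j0 + n1) hγ'pos hfinal

/-- symmetry of AA 0 -/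
lemma mainL {v δ ε : ℝ} (hδ : 0 < δ) (hε : 0 < ε)
    (hint : Set.Icc v (v + δ) ⊆ P.AA 0)
    (hgap : ∀ z ∈ P.AA 0, z ∉ Set.Ioo (v - ε) v) : False := by
  apply P.mainR (v := P.r 0 - v) hδ hε
  · intro z hz
    have h1 : P.r 0 - z ∈ Set.Icc v (v + δ) := by
      constructor
      · have := hz.2; linarith
      · have := hz.1; linarith
    have := P.compl_mem_AA (hint h1)
    have heq : P.r 0 - (P.r 0 - z) = z := by ring
    rwa [heq] at this
  · intro z hz hmem
    apply hgap (P.r 0 - z) (P.compl_mem_AA hz)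
    constructor
    · have := hmem.2; linarith
    · have := hmem.1; linarith

/-! ### the interval inside AA j -/

noncomputable def chooseT (i : ℕ) (y : ℝ) : ℕ :=
  min (P.s i) (max (P.m i) ⌊(y - P.al (i + 1)) / P.q i⌋₊)

lemma chooseT_ge (i : ℕ) (y : ℝ) : P.m i ≤ P.chooseT i y :=
  le_min (P.m_lt_s i).le (le_max_left _ _)

lemma chooseT_le (i : ℕ) (y : ℝ) : P.chooseT i y ≤ P.s i := min_le_left _ _

lemma al_succ (l : ℕ) : P.al l = (P.m l : ℝ) * P.q l + P.al (l + 1) := P.wS_succ P.m_le_T l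
lemma be_succ (l : ℕ) : P.be l = (P.s l : ℝ) * P.q l + P.be (l + 1) := P.wS_succ P.s_le_T l

lemma greedy_step {l : ℕ} {y : ℝ} (h1 : P.al l ≤ y) (h2 : y ≤ P.be l) :
    P.al (l + 1) ≤ y - (P.chooseT l y : ℝ) * P.q l ∧
      y - (P.chooseT l y : ℝ) * P.q l ≤ P.be (l + 1) := by
  set fl := ⌊(y - P.al (l + 1)) / P.q l⌋₊ with hfl
  have hq := P.hq l
  have hal := P.al_succ l
  have hbe := P.be_succ l
  have hmq : 0 ≤ (P.m l : ℝ) * P.q l := by positivity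
  have hz0 : 0 ≤ (y - P.al (l + 1)) / P.q l := by
    apply div_nonneg _ hq.le
    linarith
  have hlen := P.q_le_len l
  constructor
  · by_cases hmf : fl ≤ P.m l
    · have ht : P.chooseT l y = P.m l := by
        unfold chooseT
        rw [← hfl, max_eq_left hmf, min_eq_right (P.m_lt_s l).le]
      rw [ht]; linarith
    · push_neg at hmf
      have ht : P.chooseT l y ≤ fl := by
        unfold chooseT
        rw [← hfl, max_eq_right hmf.le]
        exact min_le_right _ _
      have hfle : (fl : ℝ) ≤ (y - P.al (l + 1)) / P.q l := Nat.floor_le hz0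
      have h3 : (P.chooseT l y : ℝ) ≤ (y - P.al (l + 1)) / P.q l :=
        le_trans (by exact_mod_cast ht) hfle
      have := (le_div_iff₀ hq).1 h3
      linarith
  · by_cases hsf : P.s l ≤ fl
    · have ht : P.chooseT l y = P.s l := by
        unfold chooseT
        rw [← hfl]
        exact min_eq_left (le_trans hsf (le_max_right _ _))
      rw [ht]; linarith
    · push_neg at hsf
      have ht : fl ≤ P.chooseT l y := by
        unfold chooseT
        rw [← hfl]
        exact le_min hsf.le (le_max_right _ _)
      have hz : (y - P.al (l + 1)) / P.q l < (fl : ℝ) + 1 := Nat.lt_floor_add_one _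
      have h4 : y - P.al (l + 1) < ((fl : ℝ) + 1) * P.q l := by
        have := (div_lt_iff₀ hq).1 hz
        linarith
      have h5 : (fl : ℝ) ≤ (P.chooseT l y : ℝ) := by exact_mod_cast ht
      nlinarith

noncomputable def rem (x : ℝ) (j : ℕ) : ℕ → ℝ
  | 0 => x
  | n + 1 => rem x j n - (P.chooseT (j + n) (rem x j n) : ℝ) * P.q (j + n)

lemma rem_invariant {x : ℝ} {j : ℕ} (h1 : P.al j ≤ x) (h2 : x ≤ P.be j) (n : ℕ) :
    P.al (j + n) ≤ P.rem x j n ∧ P.rem x j n ≤ P.be (j + n) := by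
  induction n with
  | zero => exact ⟨by simpa [rem] using h1, by simpa [rem] using h2⟩
  | succ n ih =>
    have := P.greedy_step ih.1 ih.2
    have he : j + (n + 1) = (j + n) + 1 := by omega
    rw [he]
    exact this

/-- the central interval is inside AA j -/
lemma interval_subset (j : ℕ) : Set.Icc (P.al j) (P.be j) ⊆ P.AA j := by
  rintro x ⟨h1, h2⟩
  classical
  set c : ℕ → ℕ := fun i => if i < j then 0 else P.chooseT i (P.rem x j (i - j)) with hc
  have hvalid : P.Valid c := by
    intro i
    rw [hc]
    by_cases h : i < j
    · simp only [if_pos h]; exact P.zero_mem_SS i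
    · simp only [if_neg h]
      exact P.mid_mem_SS (P.chooseT_ge i _) (P.chooseT_le i _)
  have hzero : ∀ i, i < j → c i = 0 := by intro i hi; simp [hc, hi]
  set f : ℕ → ℝ := fun i => (c i : ℝ) * P.q i with hf
  have hsumm : Summable f := P.valid_summable hvalid
  have hpartial : ∀ n, ∑ i ∈ Finset.range (j + n), f i = x - P.rem x j n := by
    intro n
    induction n with
    | zero =>
      simp only [Nat.add_zero, rem, sub_zero]
      have : ∀ i ∈ Finset.range j, f i = 0 := by
        intro i hi
        rw [Finset.mem_range] at hi
        simp [hf, hc, hi]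
      rw [Finset.sum_congr rfl this]
      simp [rem]
    | succ n ih =>
      have he : j + (n + 1) = (j + n) + 1 := by omega
      rw [he, Finset.sum_range_succ, ih]
      have hcv : c (j + n) = P.chooseT (j + n) (P.rem x j n) := by
        simp [hc, Nat.not_lt.2 (Nat.le_add_right j n)]
      rw [hf]
      simp only
      rw [hcv]
      show x - P.rem x j n + _ = x - P.rem x j (n + 1)
      rw [show P.rem x j (n + 1)
          = P.rem x j n - (P.chooseT (j + n) (P.rem x j n) : ℝ) * P.q (j + n) from rfl]
      ring
  -- limits
  have hrem0 : Filter.Tendsto (fun n => P.rem x j n) Filter.atTop (nhds 0) := by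
    have hlow : ∀ n, P.al (j + n) ≤ P.rem x j n := fun n => (P.rem_invariant h1 h2 n).1
    have hhigh : ∀ n, P.rem x j n ≤ P.be (j + n) := fun n => (P.rem_invariant h1 h2 n).2
    have hal0 : Filter.Tendsto (fun n => P.al (j + n)) Filter.atTop (nhds 0) := by
      have h0 : Filter.Tendsto (fun n : ℕ => n + j) Filter.atTop Filter.atTop :=
        Filter.tendsto_add_atTop_nat j
      have := P.al_tendsto.comp h0
      apply this.congr; intro n; simp [Function.comp]; congr 1; omega
    have hbe0 : Filter.Tendsto (fun n => P.be (j + n)) Filter.atTop (nhds 0) := by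
      have h0 : Filter.Tendsto (fun n : ℕ => n + j) Filter.atTop Filter.atTop :=
        Filter.tendsto_add_atTop_nat j
      have := P.be_tendsto.comp h0
      apply this.congr; intro n; simp [Function.comp]; congr 1; omega
    exact tendsto_of_tendsto_of_tendsto_of_le_of_le hal0 hbe0 hlow hhigh
  have hL := hsumm.hasSum
  have hten : Filter.Tendsto (fun N => ∑ i ∈ Finset.range N, f i) Filter.atTop
      (nhds (∑' i, f i)) := hL.tendsto_sum_nat
  have hten2 : Filter.Tendsto (fun n => ∑ i ∈ Finset.range (j + n), f i) Filter.atTop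
      (nhds (∑' i, f i)) := by
    have h0 : Filter.Tendsto (fun n : ℕ => n + j) Filter.atTop Filter.atTop :=
      Filter.tendsto_add_atTop_nat j
    have := hten.comp h0
    apply this.congr; intro n; simp only [Function.comp]; rw [Nat.add_comm n j]
  have hten3 : Filter.Tendsto (fun n => x - P.rem x j n) Filter.atTop (nhds x) := by
    have := (tendsto_const_nhds (x := x) (f := Filter.atTop (α := ℕ))).sub hrem0
    simpa using this
  have hx : (∑' i, f i) = x := by
    apply tendsto_nhds_unique hten2
    apply hten3.congr
    intro n
    exact (hpartial n).symm
  exact ⟨c, hvalid, hzero, hx ▸ hL⟩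

lemma al_lt_be (j : ℕ) : P.al j < P.be j := by
  have h1 := P.al_succ j
  have h2 := P.be_succ j
  have h3 := P.al_le_be (j + 1)
  have h4 : (P.m j : ℝ) * P.q j < (P.s j : ℝ) * P.q j := by
    apply mul_lt_mul_of_pos_right _ (P.hq j)
    exact_mod_cast P.m_lt_s j
  linarith

/-! ### compactness of AA 0 -/

lemma SS_finite (i : ℕ) : (P.SS i).Finite :=
  (((Set.finite_Icc (P.m i) (P.s i)).insert (P.T i)).insert 0)

noncomputable def Vmap (c : ∀ i : ℕ, {n : ℕ // n ∈ P.SS i}) : ℝ :=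
  ∑' i, ((c i : ℕ) : ℝ) * P.q i

lemma AA0_eq_range : P.AA 0 = Set.range P.Vmap := by
  ext x
  constructor
  · rintro ⟨c, hvalid, -, hsum⟩
    exact ⟨fun i => ⟨c i, hvalid i⟩, hsum.tsum_eq⟩
  · rintro ⟨c', rfl⟩
    refine ⟨fun i => (c' i : ℕ), fun i => (c' i).2, fun i hi => by omega, ?_⟩
    exact (P.summable_w (fun i => P.SS_le_T (c' i).2)).hasSum

lemma isCompact_AA0 : IsCompact (P.AA 0) := by
  haveI : ∀ i : ℕ, Finite {n : ℕ // n ∈ P.SS i} := fun i => (P.SS_finite i).to_subtype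
  haveI : ∀ i : ℕ, CompactSpace {n : ℕ // n ∈ P.SS i} := fun i => Finite.compactSpace
  have hcont : Continuous P.Vmap := by
    apply continuous_tsum (u := P.g)
    · intro i
      have h1 : Continuous fun c : (∀ i : ℕ, {n : ℕ // n ∈ P.SS i}) => c i :=
        continuous_apply i
      exact (continuous_of_discreteTopology
        (f := fun n : {n : ℕ // n ∈ P.SS i} => ((n : ℕ) : ℝ) * P.q i)).comp h1
    · exact P.summable_g
    · intro i c
      rw [Real.norm_eq_abs, abs_of_nonneg (mul_nonneg (Nat.cast_nonneg _) (P.hq i).le)]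
      apply mul_le_mul_of_nonneg_right _ (P.hq i).le
      exact_mod_cast P.SS_le_T (c i).2
  rw [P.AA0_eq_range]
  exact isCompact_range hcont

lemma isClosed_AA0 : IsClosed (P.AA 0) := P.isCompact_AA0.isClosed

/-! ### closure of interior -/

lemma closure_interior_AA0 : P.AA 0 = closure (interior (P.AA 0)) := by
  apply le_antisymm
  · intro x hx
    rw [Metric.mem_closure_iff]
    intro ε hε
    obtain ⟨j, hj⟩ : ∃ j, P.r j < ε := by
      have := P.r_tendsto.eventually (gt_mem_nhds hε)
      obtain ⟨N, hN⟩ := Filter.eventually_atTop.1 this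
      exact ⟨N, hN N le_rfl⟩
    obtain ⟨f, hf, hxf⟩ := P.FpF_split j hx
    set y := f + (P.al j + P.be j) / 2 with hy
    refine ⟨y, ?_, ?_⟩
    · -- y is in the interior
      have hIoo : Set.Ioo (f + P.al j) (f + P.be j) ⊆ interior (P.AA 0) := by
        apply interior_maximal _ isOpen_Ioo
        intro z hz
        have hz' : z - f ∈ Set.Icc (P.al j) (P.be j) :=
          ⟨by linarith [hz.1], by linarith [hz.2]⟩
        have := P.FpF_compose hf (P.interval_subset j hz')
        simpa using this
      apply hIoo
      have := P.al_lt_be j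
      constructor
      · rw [hy]; linarith
      · rw [hy]; linarith
    · rw [Real.dist_eq]
      have h1 : 0 ≤ x - f := P.AA_nonneg hxf
      have h2 : x - f ≤ P.r j := P.AA_le_r hxf
      have h3 : 0 ≤ P.al j := P.al_nonneg j
      have h4 : P.be j ≤ P.r j := P.be_le_r j
      have h5 : P.al j ≤ P.be j := P.al_le_be j
      rw [abs_lt, hy]
      constructor
      · have := P.r_pos j
        nlinarith
      · nlinarith
  · have : closure (interior (P.AA 0)) ⊆ closure (P.AA 0) :=
      closure_mono interior_subset
    rwa [P.isClosed_AA0.closure_eq] at this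

/-! ### the endpoint condition and the Cantorval property of AA 0 -/

lemma connComp_closed {x : ℝ} (hx : x ∈ P.AA 0) :
    IsClosed (connectedComponentIn (P.AA 0) x) := by
  set C := connectedComponentIn (P.AA 0) x with hC
  have hxC : x ∈ C := mem_connectedComponentIn hx
  have h1 : IsPreconnected (closure C) :=
    (isPreconnected_connectedComponentIn).closure
  have h2 : closure C ⊆ P.AA 0 :=
    closure_minimal (connectedComponentIn_subset _ _) P.isClosed_AA0
  have h3 : closure C ⊆ C :=
    h1.subset_connectedComponentIn (subset_closure hxC) h2
  exact isClosed_of_closure_subset h3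

lemma noIntervalAbove {v γ : ℝ} (hγ : 0 < γ) {x : ℝ} (hx : x ∈ P.AA 0)
    (hvC : v ∈ connectedComponentIn (P.AA 0) x)
    (hvsup : v = sSup (connectedComponentIn (P.AA 0) x)) :
    ¬ (Set.Icc v (v + γ) ⊆ P.AA 0) := by
  intro hsub
  set C := connectedComponentIn (P.AA 0) x with hC
  have hpre : IsPreconnected (C ∪ Set.Icc v (v + γ)) :=
    IsPreconnected.union v hvC (Set.left_mem_Icc.2 (by linarith))
      isPreconnected_connectedComponentIn isPreconnected_Icc
  have hsub2 : C ∪ Set.Icc v (v + γ) ⊆ P.AA 0 :=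
    Set.union_subset (connectedComponentIn_subset _ _) hsub
  have hxmem : x ∈ C ∪ Set.Icc v (v + γ) := Or.inl (mem_connectedComponentIn hx)
  have := hpre.subset_connectedComponentIn hxmem hsub2
  have hmem : v + γ ∈ C := this (Or.inr (Set.right_mem_Icc.2 (by linarith)))
  have hbdd : BddAbove C := by
    apply BddAbove.mono (connectedComponentIn_subset _ _)
    exact ⟨P.r 0, fun z hz => P.AA_le_r hz⟩
  have := le_csSup hbdd hmem
  rw [← hvsup] at this
  linarith

lemma noIntervalBelow {v γ : ℝ} (hγ : 0 < γ) {x : ℝ} (hx : x ∈ P.AA 0)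
    (hvC : v ∈ connectedComponentIn (P.AA 0) x)
    (hvinf : v = sInf (connectedComponentIn (P.AA 0) x)) :
    ¬ (Set.Icc (v - γ) v ⊆ P.AA 0) := by
  intro hsub
  set C := connectedComponentIn (P.AA 0) x with hC
  have hpre : IsPreconnected (C ∪ Set.Icc (v - γ) v) :=
    IsPreconnected.union v hvC (Set.right_mem_Icc.2 (by linarith))
      isPreconnected_connectedComponentIn isPreconnected_Icc
  have hsub2 : C ∪ Set.Icc (v - γ) v ⊆ P.AA 0 :=
    Set.union_subset (connectedComponentIn_subset _ _) hsub
  have hxmem : x ∈ C ∪ Set.Icc (v - γ) v := Or.inl (mem_connectedComponentIn hx)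
  have := hpre.subset_connectedComponentIn hxmem hsub2
  have hmem : v - γ ∈ C := this (Or.inr (Set.left_mem_Icc.2 (by linarith)))
  have hbdd : BddBelow C := by
    apply BddBelow.mono (connectedComponentIn_subset _ _)
    exact ⟨0, fun z hz => P.AA_nonneg hz⟩
  have := csInf_le hbdd hmem
  rw [← hvinf] at this
  linarith

/-- points of `AA 0` with an adjacent gap above and gaps accumulating from below
have trivial components -/
lemma trivial_comp {z w : ℝ} (hz : z ∈ P.AA 0) (hzw : z < w)
    (hgap : ∀ p ∈ P.AA 0, p ∉ Set.Ioo z w) :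
    connectedComponentIn (P.AA 0) z = {z} := by
  apply le_antisymm
  · intro t ht
    set Cz := connectedComponentIn (P.AA 0) z with hCz
    have hCzA : Cz ⊆ P.AA 0 := connectedComponentIn_subset _ _
    have hoc : Set.OrdConnected Cz := (isPreconnected_connectedComponentIn).ordConnected
    have hzCz : z ∈ Cz := mem_connectedComponentIn hz
    rcases lt_trichotomy t z with hlt | heq | hgt
    · exfalso
      have hIcc : Set.Icc t z ⊆ P.AA 0 := (hoc.out ht hzCz).trans hCzA
      apply P.mainR (v := z) (δ := z - t) (ε := w - z) (by linarith) (by linarith)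
      · intro p hp
        have : p ∈ Set.Icc t z := ⟨by linarith [hp.1], hp.2⟩
        exact hIcc this
      · intro p hp hmem
        exact hgap p hp ⟨hmem.1, by linarith [hmem.2]⟩
    · exact heq
    · exfalso
      have hIcc : Set.Icc z t ⊆ P.AA 0 := (hoc.out hzCz ht).trans hCzA
      set p := min t ((z + w) / 2) with hp
      have hp1 : p ∈ Set.Icc z t := by
        constructor
        · exact le_min hgt.le (by linarith)
        · exact min_le_left _ _
      have hp2 : p ∈ Set.Ioo z w := by
        constructor
        · apply lt_min hgt (by linarith)
        · calc p ≤ (z + w) / 2 := min_le_right _ _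
          _ < w := by linarith
      exact hgap p (hIcc hp1) hp2
  · intro t ht
    rw [Set.mem_singleton_iff] at ht
    rw [ht]
    exact mem_connectedComponentIn hz

/-- mirror version -/
lemma trivial_comp' {z w : ℝ} (hz : z ∈ P.AA 0) (hzw : w < z)
    (hgap : ∀ p ∈ P.AA 0, p ∉ Set.Ioo w z) :
    connectedComponentIn (P.AA 0) z = {z} := by
  apply le_antisymm
  · intro t ht
    set Cz := connectedComponentIn (P.AA 0) z with hCz
    have hCzA : Cz ⊆ P.AA 0 := connectedComponentIn_subset _ _
    have hoc : Set.OrdConnected Cz := (isPreconnected_connectedComponentIn).ordConnected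
    have hzCz : z ∈ Cz := mem_connectedComponentIn hz
    rcases lt_trichotomy t z with hlt | heq | hgt
    · exfalso
      have hIcc : Set.Icc t z ⊆ P.AA 0 := (hoc.out ht hzCz).trans hCzA
      set p := max t ((w + z) / 2) with hp
      have hp1 : p ∈ Set.Icc t z := by
        constructor
        · exact le_max_left _ _
        · apply max_le hlt.le (by linarith)
      have hp2 : p ∈ Set.Ioo w z := by
        constructor
        · calc w < (w + z) / 2 := by linarith
          _ ≤ p := le_max_right _ _
        · apply max_lt hlt (by linarith)
      exact hgap p (hIcc hp1) hp2
    · exact heq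
    · exfalso
      have hIcc : Set.Icc z t ⊆ P.AA 0 := (hoc.out hzCz ht).trans hCzA
      apply P.mainL (v := z) (δ := t - z) (ε := z - w) (by linarith) (by linarith)
      · intro p hp
        have : p ∈ Set.Icc z t := ⟨hp.1, by linarith [hp.2]⟩
        exact hIcc this
      · intro p hp hmem
        exact hgap p hp ⟨by linarith [hmem.1], hmem.2⟩
  · intro t ht
    rw [Set.mem_singleton_iff] at ht
    rw [ht]
    exact mem_connectedComponentIn hz

theorem isCantorval_AA0 : IsCantorval (P.AA 0) := by
  refine ⟨⟨0, P.zero_mem_AA 0⟩, P.isCompact_AA0, P.closure_interior_AA0, ?_⟩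
  intro x hx hnt y hy ε hε
  set C := connectedComponentIn (P.AA 0) x with hC
  have hCA : C ⊆ P.AA 0 := connectedComponentIn_subset _ _
  have hclosed : IsClosed C := P.connComp_closed hx
  have hne : C.Nonempty := ⟨x, mem_connectedComponentIn hx⟩
  have hbddA : BddAbove C := ⟨P.r 0, fun z hz => P.AA_le_r (hCA hz)⟩
  have hbddB : BddBelow C := ⟨0, fun z hz => P.AA_nonneg (hCA hz)⟩
  have huC : sInf C ∈ C := hclosed.csInf_mem hne hbddB
  have hvC : sSup C ∈ C := hclosed.csSup_mem hne hbddA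
  have huv : sInf C < sSup C := by
    obtain ⟨a, ha, b, hb, hab⟩ := hnt
    have h1 := csInf_le hbddB ha
    have h2 := le_csSup hbddA ha
    have h3 := csInf_le hbddB hb
    have h4 := le_csSup hbddA hb
    rcases lt_or_ge (sInf C) (sSup C) with h | h
    · exact h
    · exact absurd (le_antisymm (by linarith) (by linarith) : a = b) hab
  have hoc : Set.OrdConnected C := (isPreconnected_connectedComponentIn).ordConnected
  have hIuv : Set.Icc (sInf C) (sSup C) ⊆ P.AA 0 := (hoc.out huC hvC).trans hCA
  simp only [Set.mem_insert_iff, Set.mem_singleton_iff] at hy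
  rcases hy with rfl | rfl
  · -- y = sInf C
    set u := sInf C with hu
    set δ' := min ε (sSup C - u) with hδ'
    have hδ'pos : 0 < δ' := lt_min hε (by linarith)
    have hni := P.noIntervalBelow (γ := δ' / 2) (by linarith) hx huC rfl
    obtain ⟨w, hwI, hwA⟩ := Set.not_subset.1 hni
    have hwu : w < u := by
      rcases hwI.2.lt_or_eq with h | h
      · exact h
      · exact absurd (h ▸ hCA huC) hwA
    set S := P.AA 0 ∩ Set.Icc w u with hS
    have hSne : S.Nonempty := ⟨u, hCA huC, hwu.le, le_rfl⟩
    have hSclosed : IsClosed S := P.isClosed_AA0.inter isClosed_Icc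
    have hSbdd : BddBelow S := ⟨w, fun z hz => hz.2.1⟩
    set g := sInf S with hg
    have hgS : g ∈ S := hSclosed.csInf_mem hSne hSbdd
    have hgA : g ∈ P.AA 0 := hgS.1
    have hgw : w < g := lt_of_le_of_ne hgS.2.1 (fun h => hwA (h ▸ hgA))
    have hgu : g ≤ u := hgS.2.2
    have hgapS : ∀ p ∈ P.AA 0, p ∉ Set.Ioo w g := by
      intro p hp hmem
      have hpS : p ∈ S := ⟨hp, hmem.1.le, le_trans hmem.2.le hgu⟩
      exact absurd (csInf_le hSbdd hpS) (not_le.2 hmem.2)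
    rcases eq_or_lt_of_le hgu with hEq | hLt
    · exfalso
      apply P.mainL (v := u) (δ := sSup C - u) (ε := u - w) (by linarith) (by linarith)
      · intro p hp
        exact hIuv ⟨hp.1, by linarith [hp.2]⟩
      · intro p hp hmem
        refine hgapS p hp ⟨by linarith [hmem.1], ?_⟩
        rw [hEq]; exact hmem.2
    · refine ⟨g, hgA, hLt.ne, ?_, ?_⟩
      · rw [abs_lt]
        constructor
        · have h1 : w ∈ Set.Icc (u - δ' / 2) u := hwI
          have := h1.1
          have hδε : δ' ≤ ε := min_le_left _ _
          linarith
        · linarith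
      · exact P.trivial_comp' hgA hgw hgapS
  · -- y = sSup C
    set v := sSup C with hv
    set δ' := min ε (v - sInf C) with hδ'
    have hδ'pos : 0 < δ' := lt_min hε (by linarith)
    have hni := P.noIntervalAbove (γ := δ' / 2) (by linarith) hx hvC rfl
    obtain ⟨w, hwI, hwA⟩ := Set.not_subset.1 hni
    have hwv : v < w := by
      rcases hwI.1.lt_or_eq with h | h
      · exact h
      · exact absurd (h ▸ hCA hvC) hwA
    set S := P.AA 0 ∩ Set.Icc v w with hS
    have hSne : S.Nonempty := ⟨v, hCA hvC, le_rfl, hwv.le⟩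
    have hSclosed : IsClosed S := P.isClosed_AA0.inter isClosed_Icc
    have hSbdd : BddAbove S := ⟨w, fun z hz => hz.2.2⟩
    set g := sSup S with hg
    have hgS : g ∈ S := hSclosed.csSup_mem hSne hSbdd
    have hgA : g ∈ P.AA 0 := hgS.1
    have hgw : g < w := lt_of_le_of_ne hgS.2.2 (fun h => hwA (h ▸ hgA))
    have hgv : v ≤ g := hgS.2.1
    have hgapS : ∀ p ∈ P.AA 0, p ∉ Set.Ioo g w := by
      intro p hp hmem
      have hpS : p ∈ S := ⟨hp, le_trans hgv hmem.1.le, hmem.2.le⟩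
      exact absurd (le_csSup hSbdd hpS) (not_le.2 hmem.1)
    rcases (eq_or_lt_of_le hgv).symm.imp id Eq.symm with hLt | hEq
    · refine ⟨g, hgA, hLt.ne', ?_, ?_⟩
      · rw [abs_lt]
        constructor
        · linarith
        · have h1 : w ∈ Set.Icc v (v + δ' / 2) := hwI
          have := h1.2
          have hδε : δ' ≤ ε := min_le_left _ _
          linarith
      · exact P.trivial_comp hgA hgw hgapS
    · exfalso
      apply P.mainR (v := v) (δ := v - sInf C) (ε := w - v) (by linarith) (by linarith)
      · intro p hp
        exact hIuv ⟨by linarith [hp.1], hp.2⟩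
      · intro p hp hmem
        refine hgapS p hp ⟨?_, by linarith [hmem.2]⟩
        rw [hEq]; exact hmem.1

end GFS

/-! ### subset sums of blocks of consecutive integers -/

namespace Comb

def Lsum (m j : ℕ) : ℕ := ∑ i ∈ Finset.range j, (m + i)
def Usum (M j : ℕ) : ℕ := ∑ i ∈ Finset.range j, (M - i)

lemma Lsum_two (m j : ℕ) : 2 * Lsum m j = 2 * j * m + j * (j - 1) := by
  induction j with
  | zero => simp [Lsum]
  | succ j ih =>
    unfold Lsum at ih ⊢
    rw [Finset.sum_range_succ]
    rcases Nat.eq_zero_or_pos j with rfl | hj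
    · simp only [Finset.sum_range_zero]; omega
    · have e1 : j + 1 - 1 = j := by omega
      rw [e1]
      zify [show 1 ≤ j from hj] at ih ⊢
      linear_combination ih

lemma Usum_two (M j : ℕ) (h : j ≤ M + 1) : 2 * Usum M j + j * (j - 1) = 2 * j * M := by
  induction j with
  | zero => simp [Usum]
  | succ j ih =>
    have hj : j ≤ M := by omega
    have ih' := ih (by omega)
    unfold Usum at ih' ⊢
    rw [Finset.sum_range_succ]
    rcases Nat.eq_zero_or_pos j with rfl | hjpos
    · simp only [Finset.sum_range_zero]; omega
    · have e1 : j + 1 - 1 = j := by omega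
      rw [e1]
      zify [show 1 ≤ j from hjpos, hj] at ih' ⊢
      linear_combination ih'

lemma Usum_mono (M : ℕ) : Monotone (Usum M) := by
  intro i j hij
  unfold Usum
  apply Finset.sum_le_sum_of_subset
  exact Finset.range_subset_range.2 hij

lemma Icc_eq_image (m M : ℕ) (h : m ≤ M + 1) :
    Finset.Icc m M = (Finset.range (M + 1 - m)).image (fun i => m + i) := by
  ext x
  simp only [Finset.mem_Icc, Finset.mem_image, Finset.mem_range]
  constructor
  · rintro ⟨h1, h2⟩; exact ⟨x - m, by omega, by omega⟩
  · rintro ⟨i, h1, rfl⟩; omega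

lemma sum_Icc_eq_Lsum (m M : ℕ) (h : m ≤ M + 1) :
    ∑ x ∈ Finset.Icc m M, x = Lsum m (M + 1 - m) := by
  rw [Icc_eq_image m M h, Finset.sum_image]
  · rfl
  · intro a _ b _ hab; simp only at hab; omega

lemma Icc_top_eq_image (t M jj : ℕ) (hc : M + 1 - t = jj) (htM : t ≤ M) :
    Finset.Icc t M = (Finset.range jj).image (fun i => M - i) := by
  ext x
  simp only [Finset.mem_Icc, Finset.mem_image, Finset.mem_range]
  constructor
  · rintro ⟨h1, h2⟩; exact ⟨M - x, by omega, by omega⟩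
  · rintro ⟨i, h1, rfl⟩; omega

/-- existence of a jj-element subset of Icc m M with any admissible sum -/
lemma exists_subset_sum (m M jj : ℕ) (hm : 1 ≤ m) (h1 : 1 ≤ jj) (hjM : m + jj ≤ M + 1) :
    ∀ c, Lsum m jj ≤ c → c ≤ Usum M jj →
      ∃ J : Finset ℕ, J ⊆ Finset.Icc m M ∧ J.card = jj ∧ ∑ x ∈ J, x = c := by
  intro c hcL
  induction c, hcL using Nat.le_induction with
  | base =>
    intro _
    refine ⟨Finset.Icc m (m + jj - 1), ?_, ?_, ?_⟩
    · apply Finset.Icc_subset_Icc le_rfl; omega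
    · rw [Nat.card_Icc]; omega
    · rw [sum_Icc_eq_Lsum m (m + jj - 1) (by omega)]
      congr 1; omega
  | succ c hc ih =>
    intro hcU
    obtain ⟨J, hJsub, hJcard, hJsum⟩ := ih (by omega)
    have hcltU : c < Usum M jj := by omega
    -- find a swap element
    have hswap : ∃ e ∈ J, e < M ∧ e + 1 ∉ J := by
      by_contra hcon
      push_neg at hcon
      have hne : J.Nonempty := by
        rw [← Finset.card_pos, hJcard]; omega
      set t := J.min' hne with ht
      have htJ : t ∈ J := J.min'_mem hne
      have hup : ∀ i, t + i ≤ M → t + i ∈ J := by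
        intro i
        induction i with
        | zero => intro _; simpa using htJ
        | succ i ihi =>
          intro hle
          have h2 := ihi (by omega)
          have h3 := hcon (t + i) h2 (by omega)
          have : t + (i + 1) = t + i + 1 := by omega
          rwa [this]
      have hsub1 : Finset.Icc t M ⊆ J := by
        intro x hxm
        rw [Finset.mem_Icc] at hxm
        have : x = t + (x - t) := by omega
        rw [this]
        exact hup (x - t) (by omega)
      have hsub2 : J ⊆ Finset.Icc t M := by
        intro x hx
        rw [Finset.mem_Icc]
        exact ⟨J.min'_le x hx, (Finset.mem_Icc.1 (hJsub hx)).2⟩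
      have hJeq : J = Finset.Icc t M := le_antisymm hsub2 hsub1
      have hcard : M + 1 - t = jj := by rw [hJeq, Nat.card_Icc] at hJcard; exact hJcard
      have htM : t ≤ M := (Finset.mem_Icc.1 (hJsub htJ)).2
      have : ∑ x ∈ J, x = Usum M jj := by
        rw [hJeq, Icc_top_eq_image t M jj hcard htM, Finset.sum_image]
        · rfl
        · intro a ha b hb hab
          simp only [Finset.coe_range, Set.mem_Iio] at ha hb hab
          omega
      omega
    obtain ⟨e, heJ, heM, heN⟩ := hswap
    have hem : m ≤ e := (Finset.mem_Icc.1 (hJsub heJ)).1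
    refine ⟨insert (e + 1) (J.erase e), ?_, ?_, ?_⟩
    · intro x hx
      rcases Finset.mem_insert.1 hx with rfl | hx2
      · rw [Finset.mem_Icc]; omega
      · exact hJsub (Finset.mem_of_mem_erase hx2)
    · rw [Finset.card_insert_of_notMem (fun hmm => heN (Finset.mem_of_mem_erase hmm)),
        Finset.card_erase_of_mem heJ]
      omega
    · rw [Finset.sum_insert (fun hmm => heN (Finset.mem_of_mem_erase hmm))]
      have := Finset.sum_erase_add J id heJ
      simp only [id] at this
      omega

/-- the cover arithmetic: consecutive U/L windows overlap -/
lemma LU_cover (m K j : ℕ) (hm : 2 ≤ m) (hK : m < K) (h1 : 1 ≤ j) (h2 : j ≤ K - 2) :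
    Lsum m (j + 1) ≤ Usum (m + K - 1) j + 1 := by
  have hL := Lsum_two m (j + 1)
  have hU := Usum_two (m + K - 1) j (by omega)
  have e1 : j + 1 - 1 = j := by omega
  rw [e1] at hL
  have hK2 : 2 ≤ K := by omega
  have hkeyz : (0 : ℤ) ≤ ((j : ℤ) - 1) * ((K : ℤ) - 2 - j) := by
    have e2 : (1 : ℤ) ≤ (j : ℤ) := by exact_mod_cast h1
    have e3 : (j : ℤ) ≤ (K : ℤ) - 2 := by
      have : (j : ℤ) ≤ ((K - 2 : ℕ) : ℤ) := by exact_mod_cast h2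
      omega
    nlinarith
  have hmK : (m : ℤ) + 1 ≤ (K : ℤ) := by exact_mod_cast hK
  zify [show 1 ≤ j from h1, show (1:ℕ) ≤ m + K by omega] at hL hU ⊢
  nlinarith [hL, hU, hkeyz, hmK]

/-- main existence: any value between m and s is a subset sum of Icc m (m+K-1) -/
lemma exists_subset_sum' (m K c : ℕ) (hm : 2 ≤ m) (hK : m < K)
    (hc1 : m ≤ c) (hc2 : c ≤ Usum (m + K - 1) (K - 1)) :
    ∃ J : Finset ℕ, J ⊆ Finset.Icc m (m + K - 1) ∧ ∑ x ∈ J, x = c := by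
  have hex : ∃ j, c ≤ Usum (m + K - 1) j := ⟨K - 1, hc2⟩
  classical
  set jj := Nat.find hex with hjj
  have hfind : c ≤ Usum (m + K - 1) jj := Nat.find_spec hex
  have hjjle : jj ≤ K - 1 := Nat.find_le hc2
  have hjj1 : 1 ≤ jj := by
    rcases Nat.eq_zero_or_pos jj with h | h
    · exfalso; rw [h] at hfind; simp [Usum] at hfind; omega
    · exact h
  have hLc : Lsum m jj ≤ c := by
    rcases eq_or_lt_of_le hjj1 with h | h
    · rw [← h]; simpa [Lsum] using hc1
    · have hj' : ¬ c ≤ Usum (m + K - 1) (jj - 1) := Nat.find_min hex (by omega)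
      push_neg at hj'
      have := LU_cover m K (jj - 1) hm hK (by omega) (by omega)
      have he : jj - 1 + 1 = jj := by omega
      rw [he] at this
      omega
  obtain ⟨J, h1, _, h3⟩ := exists_subset_sum m (m + K - 1) jj (by omega) hjj1 (by omega) c hLc hfind
  exact ⟨J, h1, h3⟩

end Comb
namespace Comb

lemma Lsum_eq_sGF (mm K : ℕ) (hK : 1 ≤ K) :
    Lsum mm K = (∑ t ∈ Finset.range (K - 1), (mm + t + 1)) + mm := by
  unfold Lsum
  have he : K = (K - 1) + 1 := by omega
  rw [he, Finset.sum_range_succ' (fun i => mm + i) (K - 1)]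
  simp only [Nat.add_zero]
  congr 1

lemma sum_univ_reflect (mm K : ℕ) :
    (∑ j : Fin K, (mm + (K - 1 - (j : ℕ)))) = Lsum mm K := by
  rw [Fin.sum_univ_eq_sum_range (fun j => mm + (K - 1 - j)) K]
  unfold Lsum
  exact Finset.sum_range_reflect (fun j => mm + j) K

lemma Usum_eq (mm K : ℕ) (h1 : 1 ≤ mm) (hK : 1 ≤ K) :
    Usum (mm + K - 1) (K - 1) + mm = Lsum mm K := by
  unfold Usum
  have hrefl := Finset.sum_range_reflect (fun i => mm + K - 1 - i) (K - 1)
  rw [← hrefl]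
  rw [Lsum_eq_sGF mm K hK]
  have : ∀ i ∈ Finset.range (K - 1), mm + K - 1 - (K - 1 - 1 - i) = mm + i + 1 := by
    intro i hi
    rw [Finset.mem_range] at hi
    omega
  rw [Finset.sum_congr rfl this]

lemma easy_dir (mm K : ℕ) (hm : 2 ≤ mm) (hK1 : 1 ≤ K) (Jf : Finset (Fin K)) :
    (∑ j ∈ Jf, (mm + (K - 1 - (j : ℕ)))) = 0 ∨
    (mm ≤ (∑ j ∈ Jf, (mm + (K - 1 - (j : ℕ)))) ∧
      (∑ j ∈ Jf, (mm + (K - 1 - (j : ℕ)))) ≤ Lsum mm K - mm) ∨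
    (∑ j ∈ Jf, (mm + (K - 1 - (j : ℕ)))) = Lsum mm K := by
  by_cases hempty : Jf = ∅
  · left; simp [hempty]
  · by_cases huniv : Jf = Finset.univ
    · right; right; rw [huniv]; exact sum_univ_reflect mm K
    · right; left
      obtain ⟨j0, hj0⟩ := Finset.nonempty_iff_ne_empty.2 hempty
      obtain ⟨j1, hj1⟩ : ∃ j1, j1 ∉ Jf := by
        by_contra hcon
        push_neg at hcon
        exact huniv (Finset.eq_univ_iff_forall.2 hcon)
      constructor
      · calc mm ≤ mm + (K - 1 - (j0 : ℕ)) := Nat.le_add_right _ _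
        _ ≤ ∑ j ∈ Jf, (mm + (K - 1 - (j : ℕ))) :=
            Finset.single_le_sum (f := fun j : Fin K => mm + (K - 1 - (j : ℕ)))
              (fun _ _ => Nat.zero_le _) hj0
      · have hsub : Jf ⊆ Finset.univ.erase j1 := by
          intro x hx
          exact Finset.mem_erase.2 ⟨fun h => hj1 (h ▸ hx), Finset.mem_univ x⟩
        have h1 : (∑ j ∈ Jf, (mm + (K - 1 - (j : ℕ))))
            ≤ ∑ j ∈ Finset.univ.erase j1, (mm + (K - 1 - (j : ℕ))) :=
          Finset.sum_le_sum_of_subset hsub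
        have h2 := Finset.sum_erase_add Finset.univ
          (fun j : Fin K => mm + (K - 1 - (j : ℕ))) (Finset.mem_univ j1)
        have h2' : (∑ j ∈ Finset.univ.erase j1, (mm + (K - 1 - (j : ℕ))))
            + (mm + (K - 1 - (j1 : ℕ))) = Lsum mm K := by
          rw [← sum_univ_reflect mm K]
          simpa using h2
        have h3 : mm ≤ mm + (K - 1 - (j1 : ℕ)) := Nat.le_add_right _ _
        omega

lemma val_inj (mm K : ℕ) : ∀ (a : Fin K), ∀ (b : Fin K),
    mm + (K - 1 - (a : ℕ)) = mm + (K - 1 - (b : ℕ)) → a = b := by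
  intro a b hab
  have ha := a.2
  have hb := b.2
  apply Fin.ext
  omega

lemma hard_dir (mm K c : ℕ) (hm : 2 ≤ mm) (hK : mm < K)
    (hc : c = 0 ∨ (mm ≤ c ∧ c ≤ Lsum mm K - mm) ∨ c = Lsum mm K) :
    ∃ Jf : Finset (Fin K), (∑ j ∈ Jf, (mm + (K - 1 - (j : ℕ)))) = c := by
  classical
  have hK1 : 1 ≤ K := by omega
  rcases hc with rfl | ⟨hc1, hc2⟩ | rfl
  · exact ⟨∅, by simp⟩
  · -- middle case
    have hU := Usum_eq mm K (by omega) hK1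
    obtain ⟨J, hJsub, hJsum⟩ := exists_subset_sum' mm K c hm hK hc1 (by omega)
    set val : Fin K → ℕ := fun j => mm + (K - 1 - (j : ℕ)) with hval
    set Jf : Finset (Fin K) := Finset.univ.filter (fun j => val j ∈ J) with hJf
    have himage : Jf.image val = J := by
      apply Finset.Subset.antisymm
      · intro v hv
        rw [Finset.mem_image] at hv
        obtain ⟨j, hj, rfl⟩ := hv
        exact (Finset.mem_filter.1 hj).2
      · intro v hv
        have hvI := Finset.mem_Icc.1 (hJsub hv)
        have hjn : K - 1 - (v - mm) < K := by omega
        refine Finset.mem_image.2 ⟨⟨K - 1 - (v - mm), hjn⟩, ?_, ?_⟩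
        · rw [Finset.mem_filter]
          refine ⟨Finset.mem_univ _, ?_⟩
          have : val ⟨K - 1 - (v - mm), hjn⟩ = v := by
            simp only [hval]
            omega
          rwa [this]
        · simp only [hval]
          omega
    refine ⟨Jf, ?_⟩
    have := Finset.sum_image (f := id) (g := val) (s := Jf)
      (fun a _ b _ hab => val_inj mm K a b hab)
    rw [himage] at this
    rw [← hJsum]
    simp only [id] at this
    exact this.symm
  · exact ⟨Finset.univ, sum_univ_reflect mm K⟩

end Comb

namespace Blocks

lemma Kf_succ (k : ℕ → ℕ) (j : ℕ) : Kf k (j + 1) = Kf k j + k j := rfl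

lemma Kf_mono (k : ℕ → ℕ) : Monotone (Kf k) :=
  monotone_nat_of_le_succ (fun n => by rw [Kf_succ]; omega)

lemma exists_block (k : ℕ → ℕ) (hk1 : ∀ i, 1 ≤ k i) (n : ℕ) (hn : 0 < n) :
    ∃ i, Kf k i < n ∧ n ≤ Kf k (i + 1) := by
  induction n with
  | zero => omega
  | succ n ih =>
    rcases Nat.eq_zero_or_pos n with rfl | hnpos
    · refine ⟨0, by simp [Kf], ?_⟩
      rw [Kf_succ]
      have := hk1 0
      simp [Kf]
      omega
    · obtain ⟨i, h1, h2⟩ := ih hnpos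
      rcases eq_or_lt_of_le h2 with he | hlt
      · refine ⟨i + 1, by omega, ?_⟩
        rw [Kf_succ]
        have := hk1 (i + 1)
        omega
      · exact ⟨i, by omega, hlt⟩

lemma block_unique (k : ℕ → ℕ) {n i i' : ℕ} (h1 : Kf k i < n) (h2 : n ≤ Kf k (i + 1))
    (h3 : Kf k i' < n) (h4 : n ≤ Kf k (i' + 1)) : i = i' := by
  by_contra hne
  rcases Nat.lt_or_ge i i' with h | h
  · have : Kf k (i + 1) ≤ Kf k i' := Kf_mono k (by omega)
    omega
  · have hii : i' < i := by omega
    have : Kf k (i' + 1) ≤ Kf k i := Kf_mono k (by omega)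
    omega

def emb (k : ℕ → ℕ) (p : Σ i : ℕ, Fin (k i)) : ℕ := Kf k p.1 + 1 + (p.2 : ℕ)

lemma emb_block (k : ℕ → ℕ) (p : Σ i : ℕ, Fin (k i)) :
    Kf k p.1 < emb k p ∧ emb k p ≤ Kf k (p.1 + 1) := by
  have := p.2.2
  constructor
  · unfold emb; omega
  · unfold emb; rw [Kf_succ]; omega

lemma emb_injective (k : ℕ → ℕ) : Function.Injective (emb k) := by
  rintro ⟨i, j⟩ ⟨i', j'⟩ he
  have hb := emb_block k ⟨i, j⟩
  have hb' := emb_block k ⟨i', j'⟩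
  rw [he] at hb
  have hii : i = i' := block_unique k hb.1 hb.2 hb'.1 hb'.2
  subst hii
  simp only [Sigma.mk.inj_iff, heq_eq_eq, true_and]
  apply Fin.ext
  unfold emb at he
  simp only at he
  omega

lemma emb_range (k : ℕ → ℕ) (hk1 : ∀ i, 1 ≤ k i) :
    Set.range (emb k) = {n : ℕ | n ≠ 0} := by
  ext n
  simp only [Set.mem_range, Set.mem_setOf_eq]
  constructor
  · rintro ⟨p, rfl⟩
    unfold emb; omega
  · intro hn
    obtain ⟨i, h1, h2⟩ := exists_block k hk1 n (by omega)
    have hj : n - Kf k i - 1 < k i := by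
      rw [Kf_succ] at h2; omega
    exact ⟨⟨i, ⟨n - Kf k i - 1, hj⟩⟩, by unfold emb; simp; omega⟩

lemma hasSum_blocks (k : ℕ → ℕ) (hk1 : ∀ i, 1 ≤ k i) (b : ℕ → ℝ) (hb0 : b 0 = 0)
    {x : ℝ} (hb : HasSum b x) :
    HasSum (fun i => ∑ j : Fin (k i), b (emb k ⟨i, j⟩)) x := by
  have hzero : ∀ n ∉ Set.range (emb k), b n = 0 := by
    intro n hn
    rw [emb_range k hk1] at hn
    simp only [Set.mem_setOf_eq, not_not] at hn
    rw [hn, hb0]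
  have h1 : HasSum (b ∘ emb k) x := ((emb_injective k).hasSum_iff hzero).2 hb
  exact h1.sigma (fun i => hasSum_fintype _)

end Blocks

end GFP

/-- A convergent generalized Ferens series satisfying (GF1) and (GF2)
has a Cantorval as its achievement set. The sequence a is 1-indexed (a 0 = 0 is a
dummy zero term, which does not affect the achievement set): for K_{i-1} < n ≤ K_i,
a n = (m_i + K_i - n) q_i, where blocks are indexed from 0, i.e. m i is the paper's
m_{i+1}, etc. -/
theorem stmt_5 (m k : ℕ → ℕ) (q : ℕ → ℝ) (a : ℕ → ℝ)
    (hm : ∀ n, 2 ≤ m n) (hk : ∀ n, m n < k n) (hq : ∀ n, 0 < q n)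
    (ha0 : a 0 = 0)
    (ha : ∀ i n, Kf k i < n → n ≤ Kf k (i + 1) →
      a n = ((m i : ℝ) + (Kf k (i + 1) : ℝ) - (n : ℝ)) * q i)
    (hsum : Summable a)
    (hGF1 : ∀ n, q n ≤ ((sGF m k (n + 1) : ℝ) - (m (n + 1) : ℝ) + 1) * q (n + 1))
    (hGF2 : ∀ n, (∑' i : ℕ, ((sGF m k (n + 1 + i) : ℝ) + (m (n + 1 + i) : ℝ)) * q (n + 1 + i))
      < (m n : ℝ) * q n) :
    IsCantorval (achievementSet a) := by
  classical
  have hk1 : ∀ i, 1 ≤ k i := fun i => by have := hm i; have := hk i; omega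
  have ha_nonneg : ∀ n, 0 ≤ a n := by
    intro n
    rcases Nat.eq_zero_or_pos n with rfl | hn
    · rw [ha0]
    · obtain ⟨i, h1, h2⟩ := GFP.Blocks.exists_block k hk1 n hn
      rw [ha i n h1 h2]
      apply mul_nonneg _ (hq i).le
      have e1 : (n : ℝ) ≤ (Kf k (i + 1) : ℝ) := by exact_mod_cast h2
      have e2 : (0 : ℝ) ≤ (m i : ℝ) := Nat.cast_nonneg _
      linarith
  have ha_emb : ∀ (i : ℕ) (j : Fin (k i)),
      a (GFP.Blocks.emb k ⟨i, j⟩) = ((m i + (k i - 1 - (j : ℕ)) : ℕ) : ℝ) * q i := by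
    intro i j
    have hj := j.2
    have hb := GFP.Blocks.emb_block k ⟨i, j⟩
    rw [ha i _ hb.1 hb.2]
    congr 1
    have he : GFP.Blocks.emb k ⟨i, j⟩ = Kf k i + 1 + (j : ℕ) := rfl
    have he2 : Kf k (i + 1) = Kf k i + k i := rfl
    rw [he, he2]
    have e2 : ((m i + (k i - 1 - (j : ℕ)) : ℕ) : ℝ)
        = (m i : ℝ) + ((k i : ℝ) - 1 - ((j : ℕ) : ℝ)) := by
      rw [Nat.cast_add, Nat.cast_sub (by omega), Nat.cast_sub (by omega)]
      push_cast
      ring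
    rw [e2]
    push_cast
    ring
  have hTblock : ∀ i : ℕ, (∑ j : Fin (k i), a (GFP.Blocks.emb k ⟨i, j⟩))
      = ((sGF m k i + m i : ℕ) : ℝ) * q i := by
    intro i
    rw [Finset.sum_congr rfl (fun j _ => ha_emb i j)]
    rw [← Finset.sum_mul, ← Nat.cast_sum]
    have h2 : (∑ j : Fin (k i), (m i + (k i - 1 - (j : ℕ)))) = sGF m k i + m i := by
      rw [GFP.Comb.sum_univ_reflect (m i) (k i)]
      have := GFP.Comb.Lsum_eq_sGF (m i) (k i) (hk1 i)
      rw [this]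
      have hs : sGF m k i = ∑ t ∈ Finset.range (k i - 1), (m i + t + 1) := rfl
      omega
    rw [h2]
  have hsumT : Summable (fun i => ((sGF m k i + m i : ℕ) : ℝ) * q i) := by
    have hb := GFP.Blocks.hasSum_blocks k hk1 a ha0 hsum.hasSum
    have hb2 : HasSum (fun i => ((sGF m k i + m i : ℕ) : ℝ) * q i) (∑' n, a n) :=
      (funext hTblock) ▸ hb
    exact hb2.summable
  set P : GFP.GFS := ⟨m, k, q, hm, hk, hq, hsumT, hGF1, hGF2⟩ with hP
  have hAeq : achievementSet a = P.AA 0 := by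
    ext x
    constructor
    · rintro ⟨I, hI⟩
      have hI' : HasSum (I.indicator a) x := hasSum_subtype_iff_indicator.1 hI
      have hb0 : I.indicator a 0 = 0 := by
        by_cases h0 : (0 : ℕ) ∈ I <;> simp [Set.indicator_apply, h0, ha0]
      have hblocks := GFP.Blocks.hasSum_blocks k hk1 _ hb0 hI'
      set Ji : ∀ i : ℕ, Finset (Fin (k i)) :=
        fun i => Finset.univ.filter (fun j => GFP.Blocks.emb k ⟨i, j⟩ ∈ I) with hJi
      set c : ℕ → ℕ := fun i => ∑ j ∈ Ji i, (m i + (k i - 1 - (j : ℕ))) with hc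
      have hfib : ∀ i, (∑ j : Fin (k i), I.indicator a (GFP.Blocks.emb k ⟨i, j⟩))
          = (c i : ℝ) * q i := by
        intro i
        have h1 : (∑ j : Fin (k i), I.indicator a (GFP.Blocks.emb k ⟨i, j⟩))
            = ∑ j ∈ Ji i, a (GFP.Blocks.emb k ⟨i, j⟩) := by
          rw [hJi, Finset.sum_filter]
          apply Finset.sum_congr rfl
          intro j _
          rw [Set.indicator_apply]
        rw [h1, Finset.sum_congr rfl (fun j _ => ha_emb i j), ← Finset.sum_mul,
          ← Nat.cast_sum]
      have hvalid : P.Valid c := by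
        intro i
        have hcases := GFP.Comb.easy_dir (m i) (k i) (hm i) (hk1 i) (Ji i)
        have hLsG := GFP.Comb.Lsum_eq_sGF (m i) (k i) (hk1 i)
        have hs : sGF m k i = ∑ t ∈ Finset.range (k i - 1), (m i + t + 1) := rfl
        have hci : c i = ∑ j ∈ Ji i, (m i + (k i - 1 - (j : ℕ))) := rfl
        rcases hcases with h | ⟨h1, h2⟩ | h
        · have : c i = 0 := by omega
          rw [this]
          exact P.zero_mem_SS i
        · apply P.mid_mem_SS
          · show m i ≤ c i
            omega
          · show c i ≤ sGF m k i
            omega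
        · have : c i = P.T i := by
            show c i = sGF m k i + m i
            omega
          rw [this]
          exact P.T_mem_SS i
      refine ⟨c, hvalid, fun i hi => absurd hi (Nat.not_lt_zero i), ?_⟩
      exact (funext hfib) ▸ hblocks
    · rintro ⟨c, hvalid, -, hcs⟩
      have hchoice : ∀ i, ∃ Jfi : Finset (Fin (k i)),
          (∑ j ∈ Jfi, (m i + (k i - 1 - (j : ℕ)))) = c i := by
        intro i
        apply GFP.Comb.hard_dir (m i) (k i) (c i) (hm i) (hk i)
        have hcases := P.SS_cases (hvalid i)
        have hLsG := GFP.Comb.Lsum_eq_sGF (m i) (k i) (hk1 i)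
        have hs : sGF m k i = ∑ t ∈ Finset.range (k i - 1), (m i + t + 1) := rfl
        rcases hcases with h | ⟨h1, h2⟩ | h
        · left; exact h
        · right; left
          have h2' : c i ≤ sGF m k i := h2
          exact ⟨h1, by omega⟩
        · right; right
          have h' : c i = sGF m k i + m i := h
          omega
      choose Jf hJf using hchoice
      set I : Set ℕ := GFP.Blocks.emb k '' {p : Σ i : ℕ, Fin (k i) | p.2 ∈ Jf p.1} with hIdef
      have hmemI : ∀ (i : ℕ) (j : Fin (k i)),
          (GFP.Blocks.emb k ⟨i, j⟩ ∈ I ↔ j ∈ Jf i) := by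
        intro i j
        rw [hIdef, (GFP.Blocks.emb_injective k).mem_set_image]
        exact Iff.rfl
      set b : ℕ → ℝ := I.indicator a with hb
      have hb0 : b 0 = 0 := by
        by_cases h0 : (0 : ℕ) ∈ I <;> simp [hb, Set.indicator_apply, h0, ha0]
      have hbs : Summable b := by
        apply Summable.of_nonneg_of_le _ _ hsum
        · intro n
          rw [hb, Set.indicator_apply]
          split_ifs
          · exact ha_nonneg n
          · exact le_rfl
        · intro n
          rw [hb, Set.indicator_apply]
          split_ifs
          · exact le_rfl
          · exact ha_nonneg n
      have hbx := hbs.hasSum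
      have hblocks := GFP.Blocks.hasSum_blocks k hk1 b hb0 hbx
      have hfib : ∀ i, (∑ j : Fin (k i), b (GFP.Blocks.emb k ⟨i, j⟩)) = (c i : ℝ) * q i := by
        intro i
        have h1 : (∑ j : Fin (k i), b (GFP.Blocks.emb k ⟨i, j⟩))
            = ∑ j ∈ Jf i, a (GFP.Blocks.emb k ⟨i, j⟩) := by
          have h2 : ∀ j : Fin (k i), b (GFP.Blocks.emb k ⟨i, j⟩)
              = if j ∈ Jf i then a (GFP.Blocks.emb k ⟨i, j⟩) else 0 := by
            intro j
            rw [hb, Set.indicator_apply]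
            by_cases hj : j ∈ Jf i
            · rw [if_pos ((hmemI i j).2 hj), if_pos hj]
            · rw [if_neg (fun hmm => hj ((hmemI i j).1 hmm)), if_neg hj]
          rw [Finset.sum_congr rfl (fun j _ => h2 j)]
          rw [Finset.sum_ite_mem]
          rw [Finset.univ_inter]
        rw [h1, Finset.sum_congr rfl (fun j _ => ha_emb i j), ← Finset.sum_mul,
          ← Nat.cast_sum, hJf i]
      have hxsum : HasSum (fun i => (c i : ℝ) * q i) (∑' n, b n) := (funext hfib) ▸ hblocks
      have hxx : (∑' n, b n) = x := hxsum.unique hcs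
      rw [hxx] at hbx
      exact ⟨I, hasSum_subtype_iff_indicator.2 hbx⟩
  rw [hAeq]
  exact P.isCantorval_AA0
end
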